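/- arXiv:2403.09518 — 5 statements merged into one kernel-verified Lean document; each statement's English description precedes it below -/
import Mathlib

section
/- Let H = (V,E) be a finite loopless hypergraph (every hyperedge has at least 2 vertices) with E nonempty, and suppose that the antirank satisfies ar(H)^2 ≥ Δ₂(H) + 1 (equivalently ar(H) ≥ √(Δ₂(H)+1)). Then the chromatic index satisfies q(H) ≤ Δ₂(H) + 1. -/
open Finset

/-- A proper coloring of the hyperedges `E` with colors in `{1, …, q}`:
hyperedges with the same color are equal or disjoint. -/
def IsProperColoring {V : Type*} [DecidableEq V] (E : Finset (Finset V)) (q : ℕ)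
    (c : Finset V → ℕ) : Prop :=
  (∀ e ∈ E, c e ∈ Finset.Icc 1 q) ∧
  ∀ e ∈ E, ∀ e' ∈ E, c e = c e' → e ∩ e' = ∅ ∨ e = e'

/-- The chromatic index `q(H)`: the least `q` admitting a proper coloring. -/
noncomputable def chromIndex {V : Type*} [DecidableEq V] (E : Finset (Finset V)) : ℕ :=
  sInf {q | ∃ c, IsProperColoring E q c}

/-- Degree of a vertex: the number of hyperedges containing it. -/
def vdeg {V : Type*} [DecidableEq V] (E : Finset (Finset V)) (x : V) : ℕ :=
  (E.filter (fun e => x ∈ e)).card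

/-- Degree of a vertex in the 2-section: `Σ_{e ∋ x} (|e| - 1)`. -/
def deg2 {V : Type*} [DecidableEq V] (E : Finset (Finset V)) (x : V) : ℕ :=
  ∑ e ∈ E.filter (fun e => x ∈ e), (e.card - 1)

/-- Maximum degree `Δ(H)`. -/
def maxDeg {V : Type*} [Fintype V] [DecidableEq V] (E : Finset (Finset V)) : ℕ :=
  Finset.univ.sup (vdeg E)

/-- Maximum degree `Δ₂(H)` of the 2-section. -/
def maxDeg2 {V : Type*} [Fintype V] [DecidableEq V] (E : Finset (Finset V)) : ℕ :=
  Finset.univ.sup (deg2 E)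

/-- Degree of a hyperedge: the number of other hyperedges meeting it. -/
def edgeDeg {V : Type*} [DecidableEq V] (E : Finset (Finset V)) (e : Finset V) : ℕ :=
  ((E.erase e).filter (fun a => (a ∩ e).Nonempty)).card

/-- `H` is linear: distinct hyperedges meet in at most one vertex. -/
def IsLinear {V : Type*} [DecidableEq V] (E : Finset (Finset V)) : Prop :=
  ∀ e ∈ E, ∀ e' ∈ E, e ≠ e' → (e ∩ e').card ≤ 1

set_option linter.unusedSectionVars false
set_option maxHeartbeats 1000000

namespace HGB

attribute [local instance] Classical.propDecidable

variable {α : Type*} [DecidableEq α]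

section Graph

variable (A : α → α → Prop)

/-- A step of the graph restricted to `s`. -/
def Step (s : Finset α) (x y : α) : Prop := A x y ∧ x ∈ s ∧ y ∈ s

/-- Reachability within `s`. -/
def Reach (s : Finset α) : α → α → Prop := Relation.ReflTransGen (Step A s)

/-- `s` is connected. -/
def Conn (s : Finset α) : Prop := ∀ x ∈ s, ∀ y ∈ s, Reach A s x y

/-- neighbors of `x` inside `s`. -/
noncomputable def nbrs (s : Finset α) (x : α) : Finset α := s.filter (fun y => A x y)

/-- connected component of `x` inside `s`. -/
noncomputable def comp (s : Finset α) (x : α) : Finset α := s.filter (fun y => Reach A s x y)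

/-- a proper coloring of `s` with colors `< r`. -/
def Pcol (s : Finset α) (r : ℕ) (c : α → ℕ) : Prop :=
  (∀ x ∈ s, c x < r) ∧ ∀ x ∈ s, ∀ y ∈ s, A x y → c x ≠ c y

def Colorable (s : Finset α) (r : ℕ) : Prop := ∃ c, Pcol A s r c

variable {A}

lemma reach_refl {s : Finset α} (x : α) : Reach A s x x := Relation.ReflTransGen.refl

lemma reach_trans {s : Finset α} {x y z : α} (h : Reach A s x y) (h' : Reach A s y z) :
    Reach A s x z := Relation.ReflTransGen.trans h h'

lemma reach_symm (hA : Symmetric A) {s : Finset α} {x y : α} (h : Reach A s x y) :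
    Reach A s y x := by
  induction h with
  | refl => exact Relation.ReflTransGen.refl
  | tail _ hstep ih =>
      exact Relation.ReflTransGen.trans
        (Relation.ReflTransGen.single ⟨hA hstep.1, hstep.2.2, hstep.2.1⟩) ih

lemma reach_mono {s t : Finset α} (hst : s ⊆ t) {x y : α} (h : Reach A s x y) :
    Reach A t x y := by
  induction h with
  | refl => exact Relation.ReflTransGen.refl
  | tail _ hstep ih =>
      exact Relation.ReflTransGen.tail ih ⟨hstep.1, hst hstep.2.1, hst hstep.2.2⟩

lemma reach_mem_right {s : Finset α} {x y : α} (h : Reach A s x y) : x = y ∨ y ∈ s := by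
  induction h with
  | refl => exact Or.inl rfl
  | tail _ hstep _ => exact Or.inr hstep.2.2

/-- if `T` is closed under steps of `s`, reach from `T` stays in `T`. -/
lemma reach_stay {s T : Finset α} (hT : ∀ p q, Step A s p q → p ∈ T → q ∈ T)
    {x y : α} (h : Reach A s x y) (hx : x ∈ T) : y ∈ T := by
  induction h with
  | refl => exact hx
  | tail _ hstep ih => exact hT _ _ hstep ih

/-- if `T` is closed under steps of `s` and the start is in `T`, the reach happens within `T`. -/
lemma reach_restrict {s T : Finset α} (hT : ∀ p q, Step A s p q → p ∈ T → q ∈ T)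
    {x y : α} (h : Reach A s x y) (hx : x ∈ T) : Reach A T x y := by
  induction h with
  | refl => exact Relation.ReflTransGen.refl
  | tail hr hstep ih =>
      exact Relation.ReflTransGen.tail ih
        ⟨hstep.1, reach_stay hT hr hx, hT _ _ hstep (reach_stay hT hr hx)⟩

lemma mem_comp_self {s : Finset α} {x : α} (hx : x ∈ s) : x ∈ comp A s x := by
  simp [comp, hx, reach_refl]

lemma comp_subset {s : Finset α} {x : α} : comp A s x ⊆ s := filter_subset _ _

lemma mem_comp {s : Finset α} {x y : α} : y ∈ comp A s x ↔ y ∈ s ∧ Reach A s x y := by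
  simp [comp]

lemma comp_closed {s : Finset α} {x p q : α} (hp : p ∈ comp A s x) (hstep : Step A s p q) :
    q ∈ comp A s x := by
  rw [mem_comp] at hp ⊢
  exact ⟨hstep.2.2, Relation.ReflTransGen.tail hp.2 hstep⟩

lemma comp_eq_of_mem (hA : Symmetric A) {s : Finset α} {x y : α} (hy : y ∈ comp A s x) :
    comp A s y = comp A s x := by
  rw [mem_comp] at hy
  ext z
  rw [mem_comp, mem_comp]
  constructor
  · rintro ⟨hz, hr⟩; exact ⟨hz, reach_trans hy.2 hr⟩
  · rintro ⟨hz, hr⟩; exact ⟨hz, reach_trans (reach_symm hA hy.2) hr⟩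

lemma conn_comp (hA : Symmetric A) {s : Finset α} {x : α} : Conn A (comp A s x) := by
  intro p hp q hq
  rw [mem_comp] at hp hq
  have h1 : Reach A (comp A s x) x p :=
    reach_restrict (fun a b hst ha => comp_closed ha hst) hp.2 (mem_comp_self (by
      rcases reach_mem_right hp.2 with h | h
      · exact h ▸ hp.1
      · rcases reach_mem_right (reach_symm hA hp.2) with h' | h'
        · exact h' ▸ hp.1
        · exact h'))
  have h2 : Reach A (comp A s x) x q :=
    reach_restrict (fun a b hst ha => comp_closed ha hst) hq.2 (mem_comp_self (by
      rcases reach_mem_right hq.2 with h | h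
      · exact h ▸ hq.1
      · rcases reach_mem_right (reach_symm hA hq.2) with h' | h'
        · exact h' ▸ hq.1
        · exact h'))
  exact reach_trans (reach_symm hA h1) h2

/-- if `F` is closed under `E`-adjacency (inside `s`) and contains `x`, it contains `comp s x`. -/
lemma comp_subset_closed {s F : Finset α} {x : α}
    (hx : x ∈ F) (hF : ∀ p ∈ F, ∀ q, Step A s p q → q ∈ F) :
    comp A s x ⊆ F := by
  intro y hy
  rw [mem_comp] at hy
  exact reach_stay (fun p q hst hp => hF p hp q hst) hy.2 hx

/-- a connected nonempty set has no proper nonempty closed subset. -/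
lemma closed_eq_of_conn {s F : Finset α} (hc : Conn A s) (hFs : F ⊆ s) (hne : F.Nonempty)
    (hF : ∀ p ∈ F, ∀ q, Step A s p q → q ∈ F) : F = s := by
  obtain ⟨x, hx⟩ := hne
  apply subset_antisymm hFs
  intro y hy
  exact reach_stay (fun p q hst hp => hF p hp q hst) (hc x (hFs hx) y hy) hx

lemma nbrs_mono {s t : Finset α} (h : s ⊆ t) (x : α) : nbrs A s x ⊆ nbrs A t x :=
  filter_subset_filter _ h

lemma mem_nbrs {s : Finset α} {x y : α} : y ∈ nbrs A s x ↔ y ∈ s ∧ A x y := by simp [nbrs]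

/-- Greedy extension: a color `< r` avoiding the colors of a set with few distinct colors. -/
lemma exists_free_color {u : Finset α} {c : α → ℕ} {r : ℕ}
    (h : ((u.image c)).card < r) (hvals : ∀ x ∈ u, c x < r) :
    ∃ b < r, ∀ x ∈ u, c x ≠ b := by
  have hsub : u.image c ⊆ Finset.range r := by
    intro b hb; rw [Finset.mem_image] at hb
    obtain ⟨x, hx, rfl⟩ := hb
    exact Finset.mem_range.mpr (hvals x hx)
  have : (Finset.range r \ u.image c).Nonempty := by
    rw [← Finset.card_pos, Finset.card_sdiff_of_subset hsub, Finset.card_range]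
    omega
  obtain ⟨b, hb⟩ := this
  rw [Finset.mem_sdiff, Finset.mem_range] at hb
  refine ⟨b, hb.1, fun x hx hc => hb.2 ?_⟩
  rw [Finset.mem_image]; exact ⟨x, hx, hc⟩

/-- If two distinct elements of `u` have the same value, the image is smaller than `u`. -/
lemma image_card_lt {u : Finset α} {c : α → ℕ} {p q : α} (hp : p ∈ u) (hq : q ∈ u)
    (hpq : p ≠ q) (hc : c p = c q) : (u.image c).card < u.card := by
  have h1 : u.image c = (u.erase p).image c := by
    apply subset_antisymm
    · intro b hb; rw [Finset.mem_image] at hb ⊢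
      obtain ⟨x, hx, rfl⟩ := hb
      by_cases hxp : x = p
      · exact ⟨q, Finset.mem_erase.mpr ⟨hpq.symm, hq⟩, by rw [hxp, hc]⟩
      · exact ⟨x, Finset.mem_erase.mpr ⟨hxp, hx⟩, rfl⟩
    · exact Finset.image_subset_image (erase_subset _ _)
  calc (u.image c).card = ((u.erase p).image c).card := by rw [h1]
    _ ≤ (u.erase p).card := Finset.card_image_le
    _ < u.card := by
        rw [Finset.card_erase_of_mem hp]
        have : 0 < u.card := Finset.card_pos.mpr ⟨p, hp⟩
        omega

/-- THE ENGINE: greedy coloring with a precolored part `t` and a per-subset guarantee. -/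
lemma engine (hA : Symmetric A) (hirr : ∀ x, ¬ A x x) (r : ℕ) (t : Finset α)
    (c₀ : α → ℕ) (hc₀ : Pcol A t r c₀) :
    ∀ s : Finset α, Disjoint s t →
    (∀ F ⊆ s, F.Nonempty → ∃ z ∈ F,
      ((nbrs A ((F.erase z) ∪ t) z).card < r ∨
       ((nbrs A ((F.erase z) ∪ t) z).card ≤ r ∧
        ∃ p ∈ t, ∃ q ∈ t, A z p ∧ A z q ∧ p ≠ q ∧ c₀ p = c₀ q))) →
    ∃ c : α → ℕ, (∀ x ∈ t, c x = c₀ x) ∧ Pcol A (s ∪ t) r c := by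
  intro s
  induction s using Finset.strongInduction with
  | _ s ih =>
    intro hdisj H
    rcases Finset.eq_empty_or_nonempty s with rfl | hne
    · exact ⟨c₀, fun x _ => rfl, by simpa using hc₀⟩
    · obtain ⟨z, hz, hgood⟩ := H s (Finset.Subset.refl _) hne
      set s' := s.erase z with hs'
      have hss' : s' ⊂ s := Finset.erase_ssubset hz
      obtain ⟨c, hct, hc⟩ := ih s' hss'
        (Finset.disjoint_of_subset_left (Finset.erase_subset _ _) hdisj)
        (fun F hF hFne => H F (hF.trans (Finset.erase_subset _ _)) hFne)
      -- the colored neighbors of z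
      set u := nbrs A (s' ∪ t) z with hu
      have huvals : ∀ x ∈ u, c x < r := by
        intro x hx; rw [mem_nbrs] at hx; exact hc.1 x hx.1
      have himg : (u.image c).card < r := by
        rcases hgood with hlt | ⟨hle, p, hp, q, hq, hzp, hzq, hpq, hcpq⟩
        · calc (u.image c).card ≤ u.card := Finset.card_image_le
            _ < r := hlt
        · have hpu : p ∈ u := mem_nbrs.mpr ⟨Finset.mem_union_right _ hp, hzp⟩
          have hqu : q ∈ u := mem_nbrs.mpr ⟨Finset.mem_union_right _ hq, hzq⟩
          have hcp : c p = c q := by rw [hct p hp, hct q hq, hcpq]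
          calc (u.image c).card < u.card := image_card_lt hpu hqu hpq hcp
            _ ≤ r := hle
      obtain ⟨b, hbr, hbfree⟩ := exists_free_color himg huvals
      refine ⟨fun x => if x = z then b else c x, ?_, ?_, ?_⟩
      · intro x hx
        have hxz : x ≠ z := fun h => (Finset.disjoint_left.mp hdisj hz) (h ▸ hx)
        simp only [hxz, if_false]; exact hct x hx
      · intro x hx
        by_cases hxz : x = z
        · simp [hxz, hbr]
        · simp only [hxz, if_false]
          apply hc.1
          rcases Finset.mem_union.mp hx with h | h
          · exact Finset.mem_union_left _ (Finset.mem_erase.mpr ⟨hxz, h⟩)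
          · exact Finset.mem_union_right _ h
      · intro x hx y hy hxy
        have key : ∀ w ∈ s ∪ t, w ≠ z → A z w → c w ≠ b := by
          intro w hw hwz hzw
          apply hbfree
          rw [mem_nbrs]
          refine ⟨?_, hzw⟩
          rcases Finset.mem_union.mp hw with h | h
          · exact Finset.mem_union_left _ (Finset.mem_erase.mpr ⟨hwz, h⟩)
          · exact Finset.mem_union_right _ h
        by_cases hxz : x = z <;> by_cases hyz : y = z
        · rw [hxz, hyz] at hxy; exact absurd hxy (hirr z)
        · simp only [hxz, hyz, if_true, if_false]
          exact fun h => key y hy hyz (hxz ▸ hxy) h.symm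
        · simp only [hxz, hyz, if_true, if_false]
          exact fun h => key x hx hxz (hA (hyz ▸ hxy)) h
        · simp only [hxz, hyz, if_false]
          have hx' : x ∈ s' ∪ t := by
            rcases Finset.mem_union.mp hx with h | h
            · exact Finset.mem_union_left _ (Finset.mem_erase.mpr ⟨hxz, h⟩)
            · exact Finset.mem_union_right _ h
          have hy' : y ∈ s' ∪ t := by
            rcases Finset.mem_union.mp hy with h | h
            · exact Finset.mem_union_left _ (Finset.mem_erase.mpr ⟨hyz, h⟩)
            · exact Finset.mem_union_right _ h
          exact hc.2 x hx' y hy' hxy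



/-- Path re-routing: if steps out of `K` can only go to `c` (and into `K` only from `c`),
then reachability outside `K` can avoid `K`. -/
lemma reach_out (hA : Symmetric A) {s K : Finset α} {c : α} (hc : c ∉ K)
    (hK : ∀ p q, Step A s p q → p ∈ K → (q ∈ K ∨ q = c)) {x y : α} (h : Reach A s x y) :
    (x ∉ K → (y ∉ K → Reach A (s \ K) x y) ∧ (y ∈ K → Reach A (s \ K) x c)) ∧
    (x ∈ K → y ∉ K → Reach A (s \ K) c y) := by
  have hK' : ∀ p q, Step A s p q → q ∈ K → (p ∈ K ∨ p = c) := by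
    intro p q hst hq
    exact hK q p ⟨hA hst.1, hst.2.2, hst.2.1⟩ hq
  induction h with
  | refl =>
      constructor
      · intro hx
        exact ⟨fun _ => Relation.ReflTransGen.refl, fun hx' => absurd hx' hx⟩
      · intro hx hx'
        exact absurd hx hx'
  | @tail b z hr hstep ih =>
      have hzs : z ∈ s := hstep.2.2
      have hbs : b ∈ s := hstep.2.1
      constructor
      · intro hx
        by_cases hb : b ∈ K
        · -- b ∈ K
          have hxc : Reach A (s \ K) x c := (ih.1 hx).2 hb
          constructor
          · intro hz
            rcases hK b z hstep hb with h' | h'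
            · exact absurd h' hz
            · exact h' ▸ hxc
          · intro _
            exact hxc
        · have hxb : Reach A (s \ K) x b := (ih.1 hx).1 hb
          constructor
          · intro hz
            exact Relation.ReflTransGen.tail hxb
              ⟨hstep.1, Finset.mem_sdiff.mpr ⟨hbs, hb⟩, Finset.mem_sdiff.mpr ⟨hzs, hz⟩⟩
          · intro hz
            rcases hK' b z hstep hz with h' | h'
            · exact absurd h' hb
            · exact h' ▸ hxb
      · intro hx hz
        by_cases hb : b ∈ K
        · rcases hK b z hstep hb with h' | h'
          · exact absurd h' hz
          · exact h' ▸ Relation.ReflTransGen.refl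
        · exact Relation.ReflTransGen.tail (ih.2 hx hb)
            ⟨hstep.1, Finset.mem_sdiff.mpr ⟨hbs, hb⟩, Finset.mem_sdiff.mpr ⟨hzs, hz⟩⟩

lemma reach_avoid (hA : Symmetric A) {s K : Finset α} {c : α} (hc : c ∉ K)
    (hK : ∀ p q, Step A s p q → p ∈ K → (q ∈ K ∨ q = c)) {x y : α} (h : Reach A s x y)
    (hx : x ∉ K) (hy : y ∉ K) : Reach A (s \ K) x y :=
  ((reach_out hA hc hK h).1 hx).1 hy

/-- last step of a path to `c` : there is a `c`-neighbor reachable avoiding `c`. -/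
lemma reach_last_step {s : Finset α} {z c : α} (h : Reach A s z c) (hzc : z ≠ c) :
    ∃ w, Reach A (s.erase c) z w ∧ A w c ∧ w ∈ s ∧ w ≠ c := by
  suffices h' : ∀ y, Reach A s z y →
      (y = c → ∃ w, Reach A (s.erase c) z w ∧ A w c ∧ w ∈ s ∧ w ≠ c) ∧
      (y ≠ c → (Reach A (s.erase c) z y ∨
        ∃ w, Reach A (s.erase c) z w ∧ A w c ∧ w ∈ s ∧ w ≠ c)) by
    exact (h' c h).1 rfl
  intro y hy
  induction hy with
  | refl =>
      exact ⟨fun h'' => absurd h'' hzc, fun _ => Or.inl Relation.ReflTransGen.refl⟩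
  | @tail b w hr hstep ih =>
      constructor
      · intro hwc
        by_cases hbc : b = c
        · exact ih.1 hbc
        · rcases ih.2 hbc with h'' | h''
          · exact ⟨b, h'', hwc ▸ hstep.1, hstep.2.1, hbc⟩
          · exact h''
      · intro hwc
        by_cases hbc : b = c
        · exact Or.inr (ih.1 hbc)
        · rcases ih.2 hbc with h'' | h''
          · exact Or.inl (Relation.ReflTransGen.tail h''
              ⟨hstep.1, Finset.mem_erase.mpr ⟨hbc, hstep.2.1⟩,
               Finset.mem_erase.mpr ⟨hwc, hstep.2.2⟩⟩)
          · exact Or.inr h''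


/-- `K` is a proper component of `s.erase c`. -/
def CutPart (A : α → α → Prop) (s : Finset α) (c : α) (K : Finset α) : Prop :=
  c ∈ s ∧ (∃ x ∈ s.erase c, K = comp A (s.erase c) x) ∧ (s.erase c \ K).Nonempty

lemma cutPart_subset {s : Finset α} {c : α} {K : Finset α} (h : CutPart A s c K) :
    K ⊆ s.erase c := by
  obtain ⟨_, ⟨x, _, rfl⟩, _⟩ := h
  exact comp_subset

lemma cutPart_closed {s : Finset α} {c : α} {K : Finset α} (h : CutPart A s c K)
    {p q : α} (hp : p ∈ K) (hst : Step A (s.erase c) p q) : q ∈ K := by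
  obtain ⟨_, ⟨x, _, rfl⟩, _⟩ := h
  exact comp_closed hp hst

/-- Minimal cut part: a cut part none of whose vertices is a cut vertex of `s`,
possibly avoiding a prescribed set `X`. -/
lemma minimal_cutPart (hA : Symmetric A) {s X : Finset α} (hconn : Conn A s)
    (hex : ∃ c K, CutPart A s c K ∧ K ∩ X = ∅) :
    ∃ c K, CutPart A s c K ∧ K ∩ X = ∅ ∧ ∀ z ∈ K, Conn A (s.erase z) := by
  obtain ⟨c, K, hCP, hX⟩ := hex
  -- strong induction on K.card
  suffices h : ∀ n (c : α) (K : Finset α), K.card = n → CutPart A s c K → K ∩ X = ∅ →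
      ∃ c' K', CutPart A s c' K' ∧ K' ∩ X = ∅ ∧ ∀ z ∈ K', Conn A (s.erase z) by
    exact h K.card c K rfl hCP hX
  intro n
  induction n using Nat.strong_induction_on with
  | _ n ih =>
    intro c K hcard hCP hX
    by_cases hgood : ∀ z ∈ K, Conn A (s.erase z)
    · exact ⟨c, K, hCP, hX, hgood⟩
    · push_neg at hgood
      obtain ⟨z, hzK, hzbad⟩ := hgood
      have hzs : z ∈ s.erase c := cutPart_subset hCP hzK
      have hzc : z ≠ c := (Finset.mem_erase.mp hzs).1
      have hzs' : z ∈ s := (Finset.mem_erase.mp hzs).2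
      have hcs : c ∈ s := hCP.1
      have hcz : c ∈ s.erase z := Finset.mem_erase.mpr ⟨fun h => hzc h.symm, hcs⟩
      -- find y not reaching c in s.erase z
      have hy : ∃ y ∈ s.erase z, ¬ Reach A (s.erase z) y c := by
        by_contra hall
        push_neg at hall
        apply hzbad
        intro p hp q hq
        exact reach_trans (hall p hp) (reach_symm hA (hall q hq))
      obtain ⟨y, hy1, hy2⟩ := hy
      set K'' := comp A (s.erase z) y with hK''
      have hcK'' : c ∉ K'' := fun h => hy2 (mem_comp.mp h).2
      -- K'' ⊆ K.erase z
      have hsub : K'' ⊆ K.erase z := by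
        intro w hw
        rw [mem_comp] at hw
        have hwz : w ≠ z := (Finset.mem_erase.mp hw.1).1
        refine Finset.mem_erase.mpr ⟨hwz, ?_⟩
        by_contra hwK
        -- w reaches c avoiding K, hence in s.erase z
        have hreach : Reach A (s \ K) w c := by
          refine reach_avoid (c := c) hA ?_ ?_ (hconn w (Finset.mem_erase.mp hw.1).2 c hcs) hwK ?_
          · intro h; exact (Finset.mem_erase.mp (cutPart_subset hCP h)).1 rfl
          · intro p q hst hp
            by_cases hqc : q = c
            · exact Or.inr hqc
            · refine Or.inl (cutPart_closed hCP hp ⟨hst.1, cutPart_subset hCP hp,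
                Finset.mem_erase.mpr ⟨hqc, hst.2.2⟩⟩)
          · intro h; exact (Finset.mem_erase.mp (cutPart_subset hCP h)).1 rfl
        have : Reach A (s.erase z) w c := by
          refine reach_mono ?_ hreach
          intro a ha
          rw [Finset.mem_sdiff] at ha
          exact Finset.mem_erase.mpr ⟨fun h => ha.2 (h ▸ hzK), ha.1⟩
        exact hy2 (reach_trans hw.2 this)
      have hcard'' : K''.card < n := by
        calc K''.card ≤ (K.erase z).card := Finset.card_le_card hsub
          _ < K.card := Finset.card_erase_lt_of_mem hzK
          _ = n := hcard
      refine ih K''.card hcard'' z K'' rfl ⟨hzs', ⟨y, hy1, rfl⟩, ⟨c, ?_⟩⟩ ?_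
      · exact Finset.mem_sdiff.mpr ⟨hcz, hcK''⟩
      · apply Finset.eq_empty_of_forall_notMem
        intro t ht
        rw [Finset.mem_inter] at ht
        have : t ∈ K ∩ X := Finset.mem_inter.mpr
          ⟨(Finset.mem_erase.mp (hsub ht.1)).2, ht.2⟩
        rw [hX] at this
        exact absurd this (Finset.notMem_empty t)


/-- n-step reachability. -/
def reachN (A : α → α → Prop) (s : Finset α) : ℕ → α → α → Prop
  | 0 => fun x y => x = y
  | (n+1) => fun x y => ∃ z, Step A s x z ∧ reachN A s n z y

lemma reachN_snoc {s : Finset α} {n : ℕ} {x y z : α} (h : reachN A s n x y)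
    (hst : Step A s y z) : reachN A s (n+1) x z := by
  induction n generalizing x with
  | zero => exact ⟨z, h ▸ hst, rfl⟩
  | succ n ih =>
      obtain ⟨w, hw, hr⟩ := h
      exact ⟨w, hw, ih hr⟩

lemma reach_reachN {s : Finset α} {x y : α} (h : Reach A s x y) :
    ∃ n, reachN A s n x y := by
  induction h with
  | refl => exact ⟨0, rfl⟩
  | tail _ hstep ih =>
      obtain ⟨n, hn⟩ := ih
      exact ⟨n + 1, reachN_snoc hn hstep⟩

/-- In a connected non-complete graph there is an induced path on two edges. -/
lemma induced_path (hA : Symmetric A) {s : Finset α} {p q : α}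
    (hpq : p ≠ q) (hnadj : ¬ A p q) (hr : Reach A s p q) :
    ∃ u ∈ s, ∃ v ∈ s, ∃ w ∈ s, A u v ∧ A v w ∧ ¬ A u w ∧ u ≠ w := by
  have hex : ∃ n, reachN A s n p q := reach_reachN hr
  set n := Nat.find hex with hn
  have hspec : reachN A s n p q := Nat.find_spec hex
  have hn0 : n ≠ 0 := by
    intro h
    rw [h] at hspec
    exact hpq hspec
  have hn1 : n ≠ 1 := by
    intro h
    rw [h] at hspec
    obtain ⟨z, hst, hz⟩ := hspec
    exact hnadj (hz ▸ hst.1)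
  obtain ⟨m, hm⟩ : ∃ m, n = m + 2 := ⟨n - 2, by omega⟩
  rw [hm] at hspec
  obtain ⟨z₁, hst1, z₂, hst2, hrest⟩ := hspec
  have hnadj2 : ¬ A p z₂ := by
    intro hadj
    have : reachN A s (m+1) p q := ⟨z₂, ⟨hadj, hst1.2.1, hst2.2.2⟩, hrest⟩
    exact Nat.find_min hex (by omega : m + 1 < n) this
  have hne2 : p ≠ z₂ := by
    intro h
    have : reachN A s m p q := h ▸ hrest
    exact Nat.find_min hex (by omega : m < n) this
  exact ⟨p, hst1.2.1, z₁, hst1.2.2, z₂, hst2.2.2, hst1.1, hst2.1, hnadj2, hne2⟩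

/-- color transposition with 0. -/
def swap0 (a v : ℕ) : ℕ := if v = a then 0 else if v = 0 then a else v

lemma swap0_lt {r a v : ℕ} (ha : a < r) (hv : v < r) : swap0 a v < r := by
  unfold swap0; split_ifs <;> omega

lemma swap0_inj {a v w : ℕ} (h : swap0 a v = swap0 a w) : v = w := by
  unfold swap0 at h; split_ifs at h <;> omega

lemma pcol_swap {s : Finset α} {r : ℕ} {c : α → ℕ} (h : Pcol A s r c) {a : ℕ} (ha : a < r) :
    Pcol A s r (fun x => swap0 a (c x)) := by
  refine ⟨fun x hx => swap0_lt ha (h.1 x hx), fun x hx y hy hxy hc => ?_⟩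
  exact h.2 x hx y hy hxy (swap0_inj hc)


/-- Gluing colorings of components. -/
lemma glue_comps (hA : Symmetric A) {s : Finset α} {r : ℕ}
    (h : ∀ x ∈ s, ∃ col, Pcol A (comp A s x) r col) :
    ∃ col, Pcol A s r col := by
  have key : ∀ K : Finset α, ∃ col : α → ℕ, (∃ x ∈ s, K = comp A s x) → Pcol A K r col := by
    intro K
    by_cases hK : ∃ x ∈ s, K = comp A s x
    · obtain ⟨x, hx, rfl⟩ := hK
      obtain ⟨col, hcol⟩ := h x hx
      exact ⟨col, fun _ => hcol⟩
    · exact ⟨fun _ => 0, fun h' => absurd h' hK⟩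
  choose colF hcolF using key
  refine ⟨fun y => colF (comp A s y) y, ?_, ?_⟩
  · intro y hy
    exact (hcolF _ ⟨y, hy, rfl⟩).1 y (mem_comp_self hy)
  · intro x hx y hy hxy hc
    have hyc : y ∈ comp A s x := mem_comp.mpr ⟨hy, Relation.ReflTransGen.single ⟨hxy, hx, hy⟩⟩
    have hcompeq : comp A s y = comp A s x := comp_eq_of_mem hA hyc
    have hc' : colF (comp A s x) x = colF (comp A s y) y := hc
    rw [hcompeq] at hc'
    exact (hcolF _ ⟨x, hx, rfl⟩).2 x (mem_comp_self hx) y hyc hxy hc'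

/-- Brooks: the cut-vertex case. -/
lemma brooks_cut (hA : Symmetric A) (hirr : ∀ x, ¬ A x x) {s : Finset α} {r : ℕ}
    (hconn : Conn A s) (hdeg : ∀ z ∈ s, (nbrs A s z).card ≤ r)
    {c : α} (hc : c ∈ s) (hcut : ¬ Conn A (s.erase c)) :
    ∃ col, Pcol A s r col := by
  set H := s.erase c with hH
  have hHs : H ⊆ s := Finset.erase_subset _ _
  have hlast : ∀ y ∈ H, ∃ w, w ∈ comp A H y ∧ A w c ∧ w ≠ c := by
    intro y hy
    obtain ⟨w, hw1, hw2, hw3, hw4⟩ :=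
      reach_last_step (hconn y (hHs hy) c hc) (Finset.mem_erase.mp hy).1
    exact ⟨w, mem_comp.mpr ⟨Finset.mem_erase.mpr ⟨hw4, hw3⟩, hw1⟩, hw2, hw4⟩
  have hHne : H.Nonempty := by
    rcases Finset.eq_empty_or_nonempty H with h | h
    · exact absurd (fun p hp => absurd (h ▸ hp) (Finset.notMem_empty p)) hcut
    · exact h
  have hr1 : 1 ≤ r := by
    obtain ⟨y₀, hy₀⟩ := hHne
    obtain ⟨w, hwc, hw2, _⟩ := hlast y₀ hy₀
    have hwn : w ∈ nbrs A s c := mem_nbrs.mpr ⟨hHs (comp_subset hwc), hA hw2⟩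
    exact le_trans (Finset.card_pos.mpr ⟨w, hwn⟩) (hdeg c hc)
  have hout : ∀ x ∈ H, ∃ y ∈ H, y ∉ comp A H x := by
    intro x hx
    by_contra hally
    push_neg at hally
    apply hcut
    intro p hp q hq
    exact reach_trans (reach_symm hA (mem_comp.mp (hally p hp)).2)
      (mem_comp.mp (hally q hq)).2
  have hpiece : ∀ x ∈ H, ∃ col, Pcol A (comp A H x ∪ {c}) r col ∧ col c = 0 := by
    intro x hx
    set P := comp A H x ∪ {c} with hP
    have hPs : P ⊆ s := by
      intro z hz
      rcases Finset.mem_union.mp hz with h | h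
      · exact hHs (comp_subset h)
      · exact (Finset.mem_singleton.mp h) ▸ hc
    have hcP : c ∈ P := Finset.mem_union_right _ (Finset.mem_singleton_self c)
    have hPconn : Conn A P := by
      have hreachc : ∀ z ∈ P, Reach A P z c := by
        intro z hz
        rcases Finset.mem_union.mp hz with h | h
        · have hzH : z ∈ H := comp_subset h
          obtain ⟨w, hwc, hw2, _⟩ := hlast z hzH
          have hcompeq : comp A H z = comp A H x := comp_eq_of_mem hA h
          have hwx : w ∈ comp A H x := hcompeq ▸ hwc
          have hzw : Reach A H z w := (mem_comp.mp hwc).2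
          have hreach1 : Reach A (comp A H x) z w :=
            reach_restrict (fun a b hst ha => comp_closed ha hst) hzw h
          have hreach2 : Reach A P z w :=
            reach_mono Finset.subset_union_left hreach1
          exact Relation.ReflTransGen.tail hreach2
            ⟨hw2, Finset.mem_union_left _ hwx, hcP⟩
        · rw [Finset.mem_singleton.mp h]
          exact reach_refl c
      intro za hza zb hzb
      exact reach_trans (hreachc za hza) (reach_symm hA (hreachc zb hzb))
    have hcdeg : (nbrs A P c).card < r := by
      obtain ⟨y, hyH, hynot⟩ := hout x hx
      obtain ⟨w, hwc, hw2, hw3⟩ := hlast y hyH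
      have hwH : w ∈ H := comp_subset hwc
      have hwnot : w ∉ comp A H x := by
        intro h
        apply hynot
        have h1 : comp A H w = comp A H y := comp_eq_of_mem hA hwc
        have h2 : comp A H w = comp A H x := comp_eq_of_mem hA h
        rw [← h2, h1]
        exact mem_comp_self hyH
      have hwin : w ∈ nbrs A s c := mem_nbrs.mpr ⟨hHs hwH, hA hw2⟩
      have hsub : nbrs A P c ⊆ (nbrs A s c).erase w := by
        intro g hg
        rw [mem_nbrs] at hg
        refine Finset.mem_erase.mpr ⟨?_, mem_nbrs.mpr ⟨hPs hg.1, hg.2⟩⟩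
        intro hgw
        rcases Finset.mem_union.mp hg.1 with h | h
        · exact hwnot (hgw ▸ h)
        · exact hw3 (hgw ▸ (Finset.mem_singleton.mp h))
      have h1 : (nbrs A P c).card ≤ (nbrs A s c).card - 1 := by
        calc (nbrs A P c).card ≤ ((nbrs A s c).erase w).card := Finset.card_le_card hsub
          _ = (nbrs A s c).card - 1 := Finset.card_erase_of_mem hwin
      have h2 : (nbrs A s c).card ≤ r := hdeg c hc
      have h3 : 1 ≤ (nbrs A s c).card := Finset.card_pos.mpr ⟨w, hwin⟩
      omega
    have hcol' : ∃ col, Pcol A P r col := by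
      have hengine := engine hA hirr r ∅ (fun _ => 0)
        ⟨fun z hz => absurd hz (Finset.notMem_empty z),
         fun z hz => absurd hz (Finset.notMem_empty z)⟩ P
        (Finset.disjoint_empty_right P) ?_
      · obtain ⟨col, _, hcol⟩ := hengine
        rw [Finset.union_empty] at hcol
        exact ⟨col, hcol⟩
      · intro F hF hFne
        by_cases hb : ∃ z ∈ F, ∃ y ∈ P, y ∉ F ∧ A z y
        · obtain ⟨z, hzF, y, hyP, hyF, hzy⟩ := hb
          refine ⟨z, hzF, Or.inl ?_⟩
          have hsub : nbrs A (F.erase z ∪ ∅) z ⊆ (nbrs A P z).erase y := by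
            intro g hg
            rw [Finset.union_empty, mem_nbrs] at hg
            refine Finset.mem_erase.mpr ⟨?_, mem_nbrs.mpr ⟨hF (Finset.mem_of_mem_erase hg.1), hg.2⟩⟩
            intro hgy
            exact hyF (Finset.mem_of_mem_erase (hgy ▸ hg.1))
          have hyz : y ∈ nbrs A P z := mem_nbrs.mpr ⟨hyP, hzy⟩
          have h1 : (nbrs A (F.erase z ∪ ∅) z).card ≤ (nbrs A P z).card - 1 := by
            calc (nbrs A (F.erase z ∪ ∅) z).card ≤ ((nbrs A P z).erase y).card :=
                  Finset.card_le_card hsub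
              _ = (nbrs A P z).card - 1 := Finset.card_erase_of_mem hyz
          have h2 : (nbrs A P z).card ≤ r := by
            calc (nbrs A P z).card ≤ (nbrs A s z).card :=
                  Finset.card_le_card (nbrs_mono hPs z)
              _ ≤ r := hdeg z (hPs (hF hzF))
          have h3 : 1 ≤ (nbrs A P z).card := Finset.card_pos.mpr ⟨y, hyz⟩
          omega
        · push_neg at hb
          have hFP : F = P := by
            refine closed_eq_of_conn hPconn hF hFne ?_
            intro p hp q hst
            by_contra hqF
            exact hqF (by
              by_contra hq'
              exact hq' (by
                exact absurd (hb p hp q hst.2.2 hq') (by simp [hst.1]))) 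
          refine ⟨c, hFP ▸ hcP, Or.inl ?_⟩
          have hsub : nbrs A (F.erase c ∪ ∅) c ⊆ nbrs A P c := by
            rw [Finset.union_empty]
            exact nbrs_mono ((Finset.erase_subset _ _).trans hF) c
          exact lt_of_le_of_lt (Finset.card_le_card hsub) hcdeg
    obtain ⟨col', hcol'⟩ := hcol'
    exact ⟨fun v => swap0 (col' c) (col' v), pcol_swap hcol' (hcol'.1 c hcP), by simp [swap0]⟩
  have key : ∀ K : Finset α, ∃ col : α → ℕ,
      (∃ x ∈ H, K = comp A H x) → (Pcol A (K ∪ {c}) r col ∧ col c = 0) := by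
    intro K
    by_cases hK : ∃ x ∈ H, K = comp A H x
    · obtain ⟨x, hx, rfl⟩ := hK
      obtain ⟨col, hcol⟩ := hpiece x hx
      exact ⟨col, fun _ => hcol⟩
    · exact ⟨fun _ => 0, fun h' => absurd h' hK⟩
  choose colF hcolF using key
  refine ⟨fun y => if y = c then 0 else colF (comp A H y) y, ?_, ?_⟩
  · intro y hy
    by_cases hyc : y = c
    · simp [hyc, hr1]
      omega
    · simp only [hyc, if_false]
      have hyH : y ∈ H := Finset.mem_erase.mpr ⟨hyc, hy⟩
      exact (hcolF _ ⟨y, hyH, rfl⟩).1.1 y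
        (Finset.mem_union_left _ (mem_comp_self hyH))
  · intro p hp q hq hpq
    by_cases hpc : p = c <;> by_cases hqc : q = c
    · rw [hpc, hqc] at hpq; exact absurd hpq (hirr c)
    · simp only [hpc, hqc, if_true, if_false]
      have hqH : q ∈ H := Finset.mem_erase.mpr ⟨hqc, hq⟩
      have hprop := hcolF _ ⟨q, hqH, rfl⟩
      have := hprop.1.2 c (Finset.mem_union_right _ (Finset.mem_singleton_self c))
        q (Finset.mem_union_left _ (mem_comp_self hqH)) (hpc ▸ hpq)
      rw [hprop.2] at this
      exact this
    · simp only [hpc, hqc, if_true, if_false]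
      have hpH : p ∈ H := Finset.mem_erase.mpr ⟨hpc, hp⟩
      have hprop := hcolF _ ⟨p, hpH, rfl⟩
      have := hprop.1.2 p (Finset.mem_union_left _ (mem_comp_self hpH))
        c (Finset.mem_union_right _ (Finset.mem_singleton_self c)) (hqc ▸ hpq)
      rw [hprop.2] at this
      exact this
    · simp only [hpc, hqc, if_false]
      have hpH : p ∈ H := Finset.mem_erase.mpr ⟨hpc, hp⟩
      have hqH : q ∈ H := Finset.mem_erase.mpr ⟨hqc, hq⟩
      have hqcomp : q ∈ comp A H p :=
        mem_comp.mpr ⟨hqH, Relation.ReflTransGen.single ⟨hpq, hpH, hqH⟩⟩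
      have hcompeq : comp A H q = comp A H p := comp_eq_of_mem hA hqcomp
      rw [hcompeq]
      exact (hcolF _ ⟨p, hpH, rfl⟩).1.2 p (Finset.mem_union_left _ (mem_comp_self hpH))
        q (Finset.mem_union_left _ hqcomp) hpq


/-- Brooks: finding the special triple `u, w` nonadjacent with common neighbor `v`
whose removal keeps the graph connected (`s` 2-connected case). -/
lemma find_uvw (hA : Symmetric A) (hirr : ∀ x, ¬ A x x) {s : Finset α} {r : ℕ}
    (hconn : Conn A s) (hreg : ∀ z ∈ s, (nbrs A s z).card = r) (hr3 : 3 ≤ r)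
    (hnc : ∀ z ∈ s, Conn A (s.erase z))
    (hncomp : ∃ p ∈ s, ∃ q ∈ s, p ≠ q ∧ ¬ A p q) :
    ∃ u ∈ s, ∃ w ∈ s, ∃ v ∈ s, A v u ∧ A v w ∧ ¬ A u w ∧ u ≠ w ∧
      v ≠ u ∧ v ≠ w ∧ Conn A ((s.erase u).erase w) := by
  by_cases hcut2 : ∀ x ∈ s, ∀ c' ∈ s.erase x, Conn A ((s.erase x).erase c')
  · -- Case A : no two-vertex removal disconnects
    obtain ⟨p, hp, q, hq, hpq, hnadj⟩ := hncomp
    obtain ⟨u, hu, v, hv, w, hw, huv, hvw, hnuw, hnew⟩ :=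
      induced_path hA hpq hnadj (hconn p hp q hq)
    have hwu : w ∈ s.erase u := Finset.mem_erase.mpr ⟨fun h => hnew h.symm, hw⟩
    refine ⟨u, hu, w, hw, v, hv, hA huv, hvw, hnuw, hnew, ?_, ?_, hcut2 u hu w hwu⟩
    · intro h; rw [h] at huv; exact hirr u huv
    · intro h; rw [h] at hvw; exact hirr w hvw
  · -- Case B : some `s.erase x` has a cut vertex
    push_neg at hcut2
    obtain ⟨x, hxs, c₁, hc₁, hncc⟩ := hcut2
    set H := s.erase x with hHdef
    have hHs : H ⊆ s := Finset.erase_subset _ _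
    have hHconn : Conn A H := hnc x hxs
    -- a cut part of H at c₁
    have hexPQ : ∃ p ∈ H.erase c₁, ∃ q ∈ H.erase c₁, ¬ Reach A (H.erase c₁) p q := by
      by_contra h
      push_neg at h
      exact hncc (fun p hp q hq => h p hp q hq)
    obtain ⟨p₀, hp₀, q₀, hq₀, hpq₀⟩ := hexPQ
    have hq₀notin : q₀ ∉ comp A (H.erase c₁) p₀ := fun h => hpq₀ (mem_comp.mp h).2
    have hCP₀ : CutPart A H c₁ (comp A (H.erase c₁) p₀) :=
      ⟨hc₁, ⟨p₀, hp₀, rfl⟩, ⟨q₀, Finset.mem_sdiff.mpr ⟨hq₀, hq₀notin⟩⟩⟩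
    obtain ⟨c, K₁, hCP1, -, hK₁good⟩ := minimal_cutPart hA (X := ∅) hHconn
      ⟨c₁, _, hCP₀, Finset.inter_empty _⟩
    have hcH : c ∈ H := hCP1.1
    obtain ⟨x₁, hx₁, hK₁eq⟩ := hCP1.2.1
    obtain ⟨y₀, hy₀⟩ := hCP1.2.2
    have hx₁K₁ : x₁ ∈ K₁ := hK₁eq ▸ mem_comp_self hx₁
    have hK₁sub : K₁ ⊆ H.erase c := cutPart_subset hCP1
    -- second cut part, disjoint from K₁ ∪ {c}
    have hy₀H : y₀ ∈ H.erase c := (Finset.mem_sdiff.mp hy₀).1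
    have hy₀K : y₀ ∉ K₁ := (Finset.mem_sdiff.mp hy₀).2
    set K₂₀ := comp A (H.erase c) y₀ with hK₂₀
    have hdisj20 : K₂₀ ∩ (K₁ ∪ {c}) = ∅ := by
      apply Finset.eq_empty_of_forall_notMem
      intro a ha
      rw [Finset.mem_inter] at ha
      rcases Finset.mem_union.mp ha.2 with h | h
      · apply hy₀K
        have h1 : comp A (H.erase c) a = comp A (H.erase c) y₀ := comp_eq_of_mem hA ha.1
        have h2 : comp A (H.erase c) a = comp A (H.erase c) x₁ :=
          comp_eq_of_mem hA (hK₁eq ▸ h)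
        rw [← hK₁eq] at h2
        rw [← h2, h1]
        exact mem_comp_self hy₀H
      · have : a ∈ H.erase c := comp_subset ha.1
        exact (Finset.mem_erase.mp this).1 (Finset.mem_singleton.mp h)
    have hx₁notK₂₀ : x₁ ∉ K₂₀ := by
      intro h
      have : x₁ ∈ K₂₀ ∩ (K₁ ∪ {c}) :=
        Finset.mem_inter.mpr ⟨h, Finset.mem_union_left _ hx₁K₁⟩
      rw [hdisj20] at this
      exact absurd this (Finset.notMem_empty _)
    have hCP20 : CutPart A H c K₂₀ :=
      ⟨hcH, ⟨y₀, hy₀H, rfl⟩, ⟨x₁, Finset.mem_sdiff.mpr ⟨hx₁, hx₁notK₂₀⟩⟩⟩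
    obtain ⟨c₂, K₂, hCP2, hdisj2, hK₂good⟩ := minimal_cutPart hA (X := K₁ ∪ {c}) hHconn
      ⟨c, K₂₀, hCP20, hdisj20⟩
    have hc₂H : c₂ ∈ H := hCP2.1
    obtain ⟨x₂, hx₂, hK₂eq⟩ := hCP2.2.1
    have hK₂sub : K₂ ⊆ H.erase c₂ := cutPart_subset hCP2
    -- x has a neighbor in every cut part
    have findnbr : ∀ (c' : α) (K : Finset α), CutPart A H c' K → ∃ u ∈ K, A x u := by
      intro c' K hCP'
      by_contra hno
      push_neg at hno
      have hc'H : c' ∈ H := hCP'.1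
      obtain ⟨x', hx', hKeq⟩ := hCP'.2.1
      have hx'K : x' ∈ K := hKeq ▸ mem_comp_self hx'
      have hKsub : K ⊆ H.erase c' := cutPart_subset hCP'
      have hc'x : c' ≠ x := (Finset.mem_erase.mp hc'H).1
      have hstay : ∀ p q', Step A (s.erase c') p q' → p ∈ K → q' ∈ K := by
        intro p q' hst hp
        have hq's : q' ∈ s := (Finset.mem_erase.mp hst.2.2).2
        have hq'c : q' ≠ c' := (Finset.mem_erase.mp hst.2.2).1
        by_cases hq'x : q' = x
        · exact absurd (hA (hq'x ▸ hst.1)) (hno p hp)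
        · have hq'H : q' ∈ (H.erase c') := Finset.mem_erase.mpr
            ⟨hq'c, Finset.mem_erase.mpr ⟨hq'x, hq's⟩⟩
          have hpH : p ∈ H.erase c' := hKsub hp
          have : q' ∈ comp A (H.erase c') x' :=
            comp_closed (hKeq ▸ hp) ⟨hst.1, hpH, hq'H⟩
          exact hKeq ▸ this
      have hx'se : x' ∈ s.erase c' := by
        have := hKsub hx'K
        exact Finset.mem_erase.mpr ⟨(Finset.mem_erase.mp this).1,
          hHs (Finset.mem_erase.mp this).2⟩
      have hxse : x ∈ s.erase c' := Finset.mem_erase.mpr ⟨fun h => hc'x h.symm, hxs⟩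
      have hreach := (hnc c' (hHs hc'H)) x' hx'se x hxse
      have hxK : x ∈ K := reach_stay hstay hreach hx'K
      have : x ∈ H := (Finset.mem_erase.mp (hKsub hxK)).2
      exact (Finset.mem_erase.mp this).1 rfl
    obtain ⟨u, huK₁, hxu⟩ := findnbr c K₁ hCP1
    obtain ⟨w, hwK₂, hxw⟩ := findnbr c₂ K₂ hCP2
    have hwnot : w ∉ K₁ ∪ {c} := by
      intro h
      have : w ∈ K₂ ∩ (K₁ ∪ {c}) := Finset.mem_inter.mpr ⟨hwK₂, h⟩
      rw [hdisj2] at this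
      exact absurd this (Finset.notMem_empty _)
    have hwK₁ : w ∉ K₁ := fun h => hwnot (Finset.mem_union_left _ h)
    have hwc : w ≠ c := fun h => hwnot (Finset.mem_union_right _ (h ▸ Finset.mem_singleton_self c))
    have huH : u ∈ H.erase c := hK₁sub huK₁
    have hwH : w ∈ H := (Finset.mem_erase.mp (hK₂sub hwK₂)).2
    have huw : ¬ A u w := by
      intro h
      apply hwK₁
      have hwHc : w ∈ H.erase c := Finset.mem_erase.mpr ⟨hwc, hwH⟩
      have : w ∈ comp A (H.erase c) x₁ := comp_closed (hK₁eq ▸ huK₁) ⟨h, huH, hwHc⟩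
      exact hK₁eq ▸ this
    have hunew : u ≠ w := fun h => hwK₁ (h ▸ huK₁)
    have hus : u ∈ s := hHs (Finset.mem_erase.mp huH).2
    have hws : w ∈ s := hHs hwH
    have hux : u ≠ x := (Finset.mem_erase.mp (Finset.mem_erase.mp huH).2).1
    have hwx : w ≠ x := (Finset.mem_erase.mp hwH).1
    have hcs'' : c ∈ (s.erase u).erase w := by
      have hcu : c ≠ u := fun h => (Finset.mem_erase.mp huH).1 h.symm
      exact Finset.mem_erase.mpr ⟨fun h => hwc h.symm,
        Finset.mem_erase.mpr ⟨hcu, hHs hcH⟩⟩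
    have hxs'' : x ∈ (s.erase u).erase w := Finset.mem_erase.mpr ⟨fun h => hwx h.symm,
      Finset.mem_erase.mpr ⟨fun h => hux h.symm, hxs⟩⟩
    -- subclaim (i) : K₁ ∖ {u} reaches c inside s''
    have hreachK₁ : ∀ z ∈ K₁, z ≠ u → Reach A ((s.erase u).erase w) z c := by
      intro z hzK hzu
      have hzH : z ∈ H := (Finset.mem_erase.mp (hK₁sub hzK)).2
      have hconnHu : Conn A (H.erase u) := hK₁good u huK₁
      have hcu : c ≠ u := fun h => (Finset.mem_erase.mp huH).1 h.symm
      have hreach : Reach A (H.erase u) z c :=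
        hconnHu z (Finset.mem_erase.mpr ⟨hzu, hzH⟩) c (Finset.mem_erase.mpr ⟨hcu, hcH⟩)
      set Kav := (H.erase u) \ (K₁ ∪ {c}) with hKav
      have hcKav : c ∉ Kav := by
        intro h
        exact (Finset.mem_sdiff.mp h).2 (Finset.mem_union_right _ (Finset.mem_singleton_self c))
      have hzKav : z ∉ Kav := by
        intro h
        exact (Finset.mem_sdiff.mp h).2 (Finset.mem_union_left _ hzK)
      have havoid : Reach A ((H.erase u) \ Kav) z c := by
        refine reach_avoid (c := c) hA hcKav ?_ hreach hzKav hcKav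
        intro p q hst hp
        by_cases hqc : q = c
        · exact Or.inr hqc
        · refine Or.inl (Finset.mem_sdiff.mpr ⟨hst.2.2, ?_⟩)
          intro hq
          rcases Finset.mem_union.mp hq with hq' | hq'
          · -- q ∈ K₁ ⟹ p ∈ K₁, contradiction with p ∈ Kav
            have hpH : p ∈ H := (Finset.mem_erase.mp hst.2.1).2
            have hpc : p ≠ c := by
              intro h
              exact (Finset.mem_sdiff.mp hp).2
                (Finset.mem_union_right _ (h ▸ Finset.mem_singleton_self c))
            have : p ∈ comp A (H.erase c) x₁ := comp_closed (hK₁eq ▸ hq')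
              ⟨hA hst.1, hK₁sub hq', Finset.mem_erase.mpr ⟨hpc, hpH⟩⟩
            exact (Finset.mem_sdiff.mp hp).2 (Finset.mem_union_left _ (hK₁eq ▸ this))
          · exact hqc (Finset.mem_singleton.mp hq')
      refine reach_mono ?_ havoid
      intro a ha
      rw [Finset.mem_sdiff] at ha
      have haK : a ∈ K₁ ∪ {c} := by
        by_contra h
        exact ha.2 (Finset.mem_sdiff.mpr ⟨ha.1, h⟩)
      have haw : a ≠ w := by
        intro h
        exact hwnot (h ▸ haK)
      exact Finset.mem_erase.mpr ⟨haw, Finset.mem_erase.mpr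
        ⟨(Finset.mem_erase.mp ha.1).1, hHs (Finset.mem_erase.mp ha.1).2⟩⟩
    -- subclaim (ii)
    have hreachOther : ∀ z ∈ H, z ∉ K₁ → z ≠ w → Reach A ((s.erase u).erase w) z c := by
      intro z hzH hzK hzw
      have hconnHw : Conn A (H.erase w) := hK₂good w hwK₂
      have hreach : Reach A (H.erase w) z c :=
        hconnHw z (Finset.mem_erase.mpr ⟨hzw, hzH⟩) c (Finset.mem_erase.mpr ⟨fun h => hwc h.symm, hcH⟩)
      have hcK₁ : c ∉ K₁ := fun h => (Finset.mem_erase.mp (hK₁sub h)).1 rfl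
      have havoid : Reach A ((H.erase w) \ K₁) z c := by
        refine reach_avoid (c := c) hA hcK₁ ?_ hreach hzK hcK₁
        intro p q hst hp
        by_cases hqc : q = c
        · exact Or.inr hqc
        · refine Or.inl ?_
          have hqH : q ∈ H := (Finset.mem_erase.mp hst.2.2).2
          have : q ∈ comp A (H.erase c) x₁ := comp_closed (hK₁eq ▸ hp)
            ⟨hst.1, hK₁sub hp, Finset.mem_erase.mpr ⟨hqc, hqH⟩⟩
          exact hK₁eq ▸ this
      refine reach_mono ?_ havoid
      intro a ha
      rw [Finset.mem_sdiff] at ha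
      have haH : a ∈ H := (Finset.mem_erase.mp ha.1).2
      have hau : a ≠ u := fun h => ha.2 (h ▸ huK₁)
      exact Finset.mem_erase.mpr ⟨(Finset.mem_erase.mp ha.1).1,
        Finset.mem_erase.mpr ⟨hau, hHs haH⟩⟩
    -- all of s'' reaches c
    have hall : ∀ z ∈ (s.erase u).erase w, Reach A ((s.erase u).erase w) z c := by
      intro z hz
      have hzs : z ∈ s := (Finset.mem_erase.mp (Finset.mem_erase.mp hz).2).2
      have hzu : z ≠ u := (Finset.mem_erase.mp (Finset.mem_erase.mp hz).2).1
      have hzw : z ≠ w := (Finset.mem_erase.mp hz).1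
      by_cases hzx : z = x
      · -- pick a third neighbor of x
        have hcard : 1 ≤ ((nbrs A s x) \ ({u, w} : Finset α)).card := by
          have h1 : (nbrs A s x).card ≤
              ((nbrs A s x) \ ({u, w} : Finset α)).card + ({u, w} : Finset α).card :=
            Finset.card_le_card_sdiff_add_card
          have h2 : ({u, w} : Finset α).card ≤ 2 :=
            (Finset.card_insert_le _ _).trans (by simp)
          have h3 := hreg x hxs
          omega
        obtain ⟨z₀, hz₀⟩ := Finset.card_pos.mp
          (show 0 < ((nbrs A s x) \ ({u, w} : Finset α)).card by omega)
        rw [Finset.mem_sdiff, mem_nbrs] at hz₀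
        have hz₀s : z₀ ∈ s := hz₀.1.1
        have hxz₀ : A x z₀ := hz₀.1.2
        have hz₀u : z₀ ≠ u := fun h => hz₀.2 (by simp [h])
        have hz₀w : z₀ ≠ w := fun h => hz₀.2 (by simp [h])
        have hz₀x : z₀ ≠ x := fun h => hirr x (h ▸ hxz₀)
        have hz₀H : z₀ ∈ H := Finset.mem_erase.mpr ⟨hz₀x, hz₀s⟩
        have hz₀s'' : z₀ ∈ (s.erase u).erase w := Finset.mem_erase.mpr
          ⟨hz₀w, Finset.mem_erase.mpr ⟨hz₀u, hz₀s⟩⟩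
        have hz₀reach : Reach A ((s.erase u).erase w) z₀ c := by
          by_cases h : z₀ ∈ K₁
          · exact hreachK₁ z₀ h hz₀u
          · exact hreachOther z₀ hz₀H h hz₀w
        refine Relation.ReflTransGen.trans
          (Relation.ReflTransGen.single ⟨hzx ▸ hxz₀, hz, hz₀s''⟩) hz₀reach
      · have hzH : z ∈ H := Finset.mem_erase.mpr ⟨hzx, hzs⟩
        by_cases h : z ∈ K₁
        · exact hreachK₁ z h hzu
        · exact hreachOther z hzH h hzw
    refine ⟨u, hus, w, hws, x, hxs, hxu, hxw, huw, hunew, fun h => hux h.symm,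
      fun h => hwx h.symm, ?_⟩
    intro za hza zb hzb
    exact reach_trans (hall za hza) (reach_symm hA (hall zb hzb))


/-- Brooks: the 2-connected regular case. -/
lemma brooks_hard (hA : Symmetric A) (hirr : ∀ x, ¬ A x x) {s : Finset α} {r : ℕ}
    (hconn : Conn A s) (hreg : ∀ z ∈ s, (nbrs A s z).card = r) (hr3 : 3 ≤ r)
    (hnc : ∀ z ∈ s, Conn A (s.erase z))
    (hncomp : ∃ p ∈ s, ∃ q ∈ s, p ≠ q ∧ ¬ A p q) :
    ∃ col, Pcol A s r col := by
  obtain ⟨u, hus, w, hws, v, hvs, hvu, hvw, hnuw, hnew, hvu', hvw', hconn''⟩ :=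
    find_uvw hA hirr hconn hreg hr3 hnc hncomp
  set t : Finset α := {u, w} with ht
  set s'' := (s.erase u).erase w with hs''
  have hts : t ⊆ s := by
    intro a ha
    rcases Finset.mem_insert.mp ha with h | h
    · exact h ▸ hus
    · exact (Finset.mem_singleton.mp h) ▸ hws
  have hs''s : s'' ⊆ s := (Finset.erase_subset _ _).trans (Finset.erase_subset _ _)
  have hdisj : Disjoint s'' t := by
    rw [Finset.disjoint_right]
    intro a ha
    rcases Finset.mem_insert.mp ha with h | h
    · exact fun h' => (Finset.mem_erase.mp (Finset.mem_erase.mp h').2).1 h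
    · exact fun h' => (Finset.mem_erase.mp h').1 (Finset.mem_singleton.mp h)
  have hvs'' : v ∈ s'' := Finset.mem_erase.mpr ⟨hvw', Finset.mem_erase.mpr ⟨hvu', hvs⟩⟩
  have hc₀ : Pcol A t r (fun _ => 0) := by
    refine ⟨fun z _ => by simp only []; omega, fun p hp q hq hpq => ?_⟩
    exfalso
    rcases Finset.mem_insert.mp hp with h1 | h1 <;> rcases Finset.mem_insert.mp hq with h2 | h2
    · rw [h1, h2] at hpq; exact hirr u hpq
    · rw [h1, Finset.mem_singleton.mp h2] at hpq; exact hnuw hpq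
    · rw [Finset.mem_singleton.mp h1, h2] at hpq; exact hnuw (hA hpq)
    · rw [Finset.mem_singleton.mp h1, Finset.mem_singleton.mp h2] at hpq; exact hirr w hpq
  have hengine := engine hA hirr r t (fun _ => 0) hc₀ s'' hdisj ?_
  · obtain ⟨col, -, hcol⟩ := hengine
    have hunion : s'' ∪ t = s := by
      ext a
      constructor
      · intro h
        rcases Finset.mem_union.mp h with h | h
        · exact hs''s h
        · exact hts h
      · intro h
        by_cases hau : a = u
        · exact Finset.mem_union_right _ (Finset.mem_insert.mpr (Or.inl hau))
        · by_cases haw : a = w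
          · exact Finset.mem_union_right _ (by rw [haw, ht]; simp)
          · exact Finset.mem_union_left _ (Finset.mem_erase.mpr
              ⟨haw, Finset.mem_erase.mpr ⟨hau, h⟩⟩)
    rw [hunion] at hcol
    exact ⟨col, hcol⟩
  · intro F hF hFne
    by_cases hb : ∃ z ∈ F, ∃ y ∈ s'', y ∉ F ∧ A z y
    · obtain ⟨z, hzF, y, hys'', hyF, hzy⟩ := hb
      refine ⟨z, hzF, Or.inl ?_⟩
      have hzs : z ∈ s := hs''s (hF hzF)
      have hys : y ∈ s := hs''s hys''
      have hyn : y ∈ nbrs A s z := mem_nbrs.mpr ⟨hys, hzy⟩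
      have hsub : nbrs A (F.erase z ∪ t) z ⊆ (nbrs A s z).erase y := by
        intro g hg
        rw [mem_nbrs] at hg
        refine Finset.mem_erase.mpr ⟨?_, mem_nbrs.mpr ⟨?_, hg.2⟩⟩
        · intro hgy
          rcases Finset.mem_union.mp hg.1 with h | h
          · exact hyF (Finset.mem_of_mem_erase (hgy ▸ h))
          · exact (Finset.disjoint_right.mp hdisj (hgy ▸ h)) hys''
        · rcases Finset.mem_union.mp hg.1 with h | h
          · exact hs''s (hF (Finset.mem_of_mem_erase h))
          · exact hts h
      have h1 : (nbrs A (F.erase z ∪ t) z).card ≤ (nbrs A s z).card - 1 := by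
        calc (nbrs A (F.erase z ∪ t) z).card ≤ ((nbrs A s z).erase y).card :=
              Finset.card_le_card hsub
          _ = (nbrs A s z).card - 1 := Finset.card_erase_of_mem hyn
      have h2 := hreg z hzs
      have h3 : 1 ≤ (nbrs A s z).card := Finset.card_pos.mpr ⟨y, hyn⟩
      omega
    · push_neg at hb
      have hFeq : F = s'' := by
        refine closed_eq_of_conn hconn'' hF hFne ?_
        intro p hp q hst
        by_contra hqF
        exact (hb p hp q hst.2.2 hqF) hst.1
      refine ⟨v, hFeq ▸ hvs'', Or.inr ⟨?_, u, Finset.mem_insert_self _ _,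
        w, Finset.mem_insert.mpr (Or.inr (Finset.mem_singleton_self w)), hvu, hvw, hnew, rfl⟩⟩
      · have hsub : nbrs A (F.erase v ∪ t) v ⊆ nbrs A s v := by
          apply nbrs_mono
          intro a ha
          rcases Finset.mem_union.mp ha with h | h
          · exact hs''s (hF (Finset.mem_of_mem_erase h))
          · exact hts h
        calc (nbrs A (F.erase v ∪ t) v).card ≤ (nbrs A s v).card := Finset.card_le_card hsub
          _ = r := hreg v hvs

/-- Brooks for a connected regular non-complete graph. -/
lemma brooks_reg (hA : Symmetric A) (hirr : ∀ x, ¬ A x x) {s : Finset α} {r : ℕ}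
    (hconn : Conn A s) (hreg : ∀ z ∈ s, (nbrs A s z).card = r) (hr3 : 3 ≤ r)
    (hncomp : ∃ p ∈ s, ∃ q ∈ s, p ≠ q ∧ ¬ A p q) :
    ∃ col, Pcol A s r col := by
  by_cases hnc : ∀ z ∈ s, Conn A (s.erase z)
  · exact brooks_hard hA hirr hconn hreg hr3 hnc hncomp
  · push_neg at hnc
    obtain ⟨c, hcs, hcut⟩ := hnc
    exact brooks_cut hA hirr hconn (fun z hz => (hreg z hz).le) hcs hcut

end Graph


section Hyper

variable {V : Type*} [Fintype V] [DecidableEq V]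

/-- hyperedge adjacency. -/
def Adj (e f : Finset V) : Prop := e ≠ f ∧ (e ∩ f).Nonempty

lemma adj_symm : Symmetric (Adj (V := V)) := by
  rintro e f ⟨hne, hint⟩
  exact ⟨hne.symm, by rwa [Finset.inter_comm]⟩

lemma adj_irr : ∀ e : Finset V, ¬ Adj e e := fun e h => h.1 rfl

lemma deg2_le_maxDeg2 (E : Finset (Finset V)) (x : V) : deg2 E x ≤ maxDeg2 E :=
  Finset.le_sup (Finset.mem_univ x)

/-- The rigidity analysis at a minimum-size hyperedge of a "bad" family. -/
lemma rig (E : Finset (Finset V)) (hE : E.Nonempty) (hloopless : ∀ e ∈ E, 2 ≤ e.card)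
    (har : (E.inf' hE Finset.card) ^ 2 ≥ maxDeg2 E + 1)
    {F : Finset (Finset V)} (hFE : F ⊆ E)
    {e : Finset V} (heF : e ∈ F) (hmin : ∀ f ∈ F, e.card ≤ f.card)
    (hbadE : maxDeg2 E + 1 ≤ (nbrs Adj F e).card) :
    e.card = E.inf' hE Finset.card ∧
    maxDeg2 E + 1 = (E.inf' hE Finset.card) ^ 2 ∧
    (nbrs Adj E e).card = maxDeg2 E + 1 ∧
    (∀ x ∈ e, ∀ g ∈ E, x ∈ g → g = e ∨ (g ∈ F ∧ g.card = E.inf' hE Finset.card)) ∧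
    (∀ x ∈ e, (E.filter (fun g => x ∈ g)).card = E.inf' hE Finset.card + 1) := by
  set D := maxDeg2 E with hD
  set a := E.inf' hE Finset.card with ha
  set k := e.card with hk
  have heE : e ∈ E := hFE heF
  have hk2 : 2 ≤ k := hloopless e heE
  have hak : a ≤ k := Finset.inf'_le _ heE
  have ha2 : 2 ≤ a := Finset.le_inf' hE _ (fun f hf => hloopless f hf)
  set Fx : V → Finset (Finset V) := fun x => F.filter (fun f => x ∈ f ∧ f ≠ e) with hFx
  have heFx : ∀ x, e ∉ Fx x := by
    intro x h
    exact (Finset.mem_filter.mp h).2.2 rfl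
  have hFxsub : ∀ x ∈ e, insert e (Fx x) ⊆ E.filter (fun g => x ∈ g) := by
    intro x hx f hf
    rcases Finset.mem_insert.mp hf with h | h
    · exact Finset.mem_filter.mpr ⟨h ▸ heE, h ▸ hx⟩
    · exact Finset.mem_filter.mpr ⟨hFE (Finset.mem_filter.mp h).1,
        (Finset.mem_filter.mp h).2.1⟩
  have hFxcard : ∀ x, ∀ f ∈ Fx x, k ≤ f.card := by
    intro x f hf
    exact hmin f (Finset.mem_filter.mp hf).1
  have hsumFx : ∀ x, (Fx x).card * (k - 1) ≤ ∑ f ∈ Fx x, (f.card - 1) := by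
    intro x
    rw [← smul_eq_mul, ← Finset.sum_const]
    apply Finset.sum_le_sum
    intro f hf
    have := hFxcard x f hf
    omega
  have hsum_ins : ∀ x ∈ e, ∑ f ∈ insert e (Fx x), (f.card - 1)
      = (k - 1) + ∑ f ∈ Fx x, (f.card - 1) := by
    intro x hx
    rw [Finset.sum_insert (heFx x)]
  have hsum_le_deg2 : ∀ x ∈ e, ∑ f ∈ insert e (Fx x), (f.card - 1) ≤ deg2 E x := by
    intro x hx
    exact Finset.sum_le_sum_of_subset (hFxsub x hx)
  have step1 : ∀ x ∈ e, (k - 1) * ((Fx x).card + 1) ≤ D := by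
    intro x hx
    have h1 : (k - 1) * ((Fx x).card + 1) = (k - 1) + (Fx x).card * (k - 1) := by ring
    have h2 := hsumFx x
    have h3 := hsum_ins x hx
    have h4 := hsum_le_deg2 x hx
    have h5 := deg2_le_maxDeg2 E x
    omega
  set S := ∑ x ∈ e, (Fx x).card with hS
  have hnbrsub : nbrs Adj F e ⊆ e.biUnion Fx := by
    intro g hg
    rw [mem_nbrs] at hg
    obtain ⟨hgF, hne, hint⟩ := hg
    obtain ⟨x, hx⟩ := hint
    rw [Finset.mem_inter] at hx
    exact Finset.mem_biUnion.mpr ⟨x, hx.1,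
      Finset.mem_filter.mpr ⟨hgF, hx.2, fun h => hne h.symm⟩⟩
  have hnbrS : (nbrs Adj F e).card ≤ S := by
    calc (nbrs Adj F e).card ≤ (e.biUnion Fx).card := Finset.card_le_card hnbrsub
      _ ≤ ∑ x ∈ e, (Fx x).card := Finset.card_biUnion_le
  have step3 : D + 1 ≤ S := le_trans hbadE hnbrS
  have hsum_lhs : ∑ x ∈ e, (k - 1) * ((Fx x).card + 1) = (k - 1) * (S + k) := by
    rw [← Finset.mul_sum]
    congr 1
    rw [Finset.sum_add_distrib, Finset.sum_const, smul_eq_mul, mul_one, ← hS, ← hk]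
  have step4 : (k - 1) * (S + k) ≤ k * D := by
    have h1 : ∑ x ∈ e, (k - 1) * ((Fx x).card + 1) ≤ ∑ x ∈ e, D :=
      Finset.sum_le_sum (fun x hx => step1 x hx)
    have h3 : ∑ x ∈ e, (D : ℕ) = k * D := by
      rw [Finset.sum_const, smul_eq_mul, ← hk]
    omega
  obtain ⟨m, hm⟩ : ∃ m, k = m + 2 := ⟨k - 2, by omega⟩
  have hk1 : k - 1 = m + 1 := by omega
  have step4' : (m + 1) * (S + (m + 2)) ≤ (m + 2) * D := by
    rw [← hk1, ← hm]
    exact step4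
  have hk2D : k ^ 2 ≤ D + 1 := by
    have h1 : (m + 1) * (D + 1 + (m + 2)) ≤ (m + 1) * (S + (m + 2)) := by
      apply Nat.mul_le_mul_left
      omega
    have e1 : (m + 1) * (D + 1 + (m + 2)) = m * D + D + m * m + 4 * m + 3 := by ring
    have e2 : (m + 2) * D = m * D + 2 * D := by ring
    have hsq : k ^ 2 = m * m + 4 * m + 4 := by rw [hm]; ring
    omega
  have haD2 : a ^ 2 ≤ k ^ 2 := Nat.pow_le_pow_left hak 2
  have hDa1 : D + 1 = a ^ 2 := by omega
  have hka : k = a := by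
    by_contra h
    have hlt : a < k := lt_of_le_of_ne hak (fun h' => h h'.symm)
    have : a ^ 2 < k ^ 2 := Nat.pow_lt_pow_left hlt (by omega)
    omega
  have hsq : k ^ 2 = m * m + 4 * m + 4 := by rw [hm]; ring
  have hDval : D = m * m + 4 * m + 3 := by omega
  have hSeq : S = D + 1 := by
    have e1 : (m + 1) * (S + (m + 2)) = m * S + S + m * m + 3 * m + 2 := by ring
    have e2 : (m + 2) * D = m * D + 2 * D := by ring
    nlinarith [step4', step3]
  have hsum_eq : ∑ x ∈ e, (k - 1) * ((Fx x).card + 1) = k * D := by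
    rw [hsum_lhs, hSeq, hk1, hm, hDval]
    ring
  have step7 : ∀ x ∈ e, (k - 1) * ((Fx x).card + 1) = D := by
    intro x hx
    by_contra hne
    have hlt : (k - 1) * ((Fx x).card + 1) < D := lt_of_le_of_ne (step1 x hx) hne
    have hstrict : ∑ y ∈ e, (k - 1) * ((Fx y).card + 1) < ∑ y ∈ e, D :=
      Finset.sum_lt_sum (fun y hy => step1 y hy) ⟨x, hx, hlt⟩
    rw [hsum_eq, Finset.sum_const, smul_eq_mul, ← hk] at hstrict
    omega
  have step8 : ∀ x ∈ e, (Fx x).card = k := by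
    intro x hx
    have h1 := step7 x hx
    rw [hk1] at h1
    have h2 : (m + 1) * ((Fx x).card + 1) = m * (Fx x).card + (Fx x).card + m + 1 := by ring
    have h3 : (m + 1) * (m + 3) = m * m + 4 * m + 3 := by ring
    have h4 : (m + 1) * ((Fx x).card + 1) = (m + 1) * (m + 3) := by omega
    have h5 : (Fx x).card + 1 = m + 3 := Nat.eq_of_mul_eq_mul_left (by omega) h4
    omega
  have step9 : ∀ x ∈ e, (E.filter (fun g => x ∈ g)) = insert e (Fx x) ∧
      (∀ f ∈ Fx x, f.card = k) := by
    intro x hx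
    have hsand1 : (k - 1) * ((Fx x).card + 1) ≤ ∑ f ∈ insert e (Fx x), (f.card - 1) := by
      have h1 : (k - 1) * ((Fx x).card + 1) = (k - 1) + (Fx x).card * (k - 1) := by ring
      have h2 := hsumFx x
      have h3 := hsum_ins x hx
      omega
    have hsand2 : ∑ f ∈ insert e (Fx x), (f.card - 1) ≤ deg2 E x := hsum_le_deg2 x hx
    have hsand3 : deg2 E x ≤ D := deg2_le_maxDeg2 E x
    have heq7 := step7 x hx
    have hdegdef : deg2 E x = ∑ f ∈ E.filter (fun g => x ∈ g), (f.card - 1) := rfl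
    have hsum_val : ∑ f ∈ insert e (Fx x), (f.card - 1) = D := by omega
    have hsum_deg : ∑ f ∈ E.filter (fun g => x ∈ g), (f.card - 1) = D := by omega
    have hFxsum : ∑ f ∈ Fx x, (f.card - 1) = (Fx x).card * (k - 1) := by
      have h3 := hsum_ins x hx
      have h8 := step8 x hx
      have h1 : (k - 1) * ((Fx x).card + 1) = (k - 1) + (Fx x).card * (k - 1) := by ring
      omega
    constructor
    · have hsplit : ∑ f ∈ (E.filter (fun g => x ∈ g)) \ insert e (Fx x), (f.card - 1)
          + ∑ f ∈ insert e (Fx x), (f.card - 1)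
          = ∑ f ∈ E.filter (fun g => x ∈ g), (f.card - 1) :=
        Finset.sum_sdiff (hFxsub x hx)
      have hzero : ∑ f ∈ (E.filter (fun g => x ∈ g)) \ insert e (Fx x), (f.card - 1) = 0 := by
        omega
      have hempty : (E.filter (fun g => x ∈ g)) \ insert e (Fx x) = ∅ := by
        by_contra hne'
        obtain ⟨f, hf⟩ := Finset.nonempty_of_ne_empty hne'
        have hfE : f ∈ E := (Finset.mem_filter.mp (Finset.mem_sdiff.mp hf).1).1
        have hfc := hloopless f hfE
        have := Finset.sum_eq_zero_iff.mp hzero f hf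
        omega
      apply subset_antisymm _ (hFxsub x hx)
      intro f hf
      by_contra hfn
      have : f ∈ (E.filter (fun g => x ∈ g)) \ insert e (Fx x) :=
        Finset.mem_sdiff.mpr ⟨hf, hfn⟩
      rw [hempty] at this
      exact absurd this (Finset.notMem_empty f)
    · intro f hf
      by_contra hfc
      have hfk := hFxcard x f hf
      have hlt : k - 1 < f.card - 1 := by omega
      have hstrict : ∑ g ∈ Fx x, (k - 1 : ℕ) < ∑ g ∈ Fx x, (g.card - 1) :=
        Finset.sum_lt_sum (fun g hg => by have := hFxcard x g hg; omega) ⟨f, hf, hlt⟩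
      rw [Finset.sum_const, smul_eq_mul, hFxsum] at hstrict
      omega
  refine ⟨hka, hDa1, ?_, ?_, ?_⟩
  · have hsub1 : nbrs Adj E e ⊆ nbrs Adj F e := by
      intro g hg
      rw [mem_nbrs] at hg ⊢
      obtain ⟨hgE, hne, hint⟩ := hg
      obtain ⟨x, hx⟩ := hint
      rw [Finset.mem_inter] at hx
      have hgfil : g ∈ E.filter (fun g => x ∈ g) := Finset.mem_filter.mpr ⟨hgE, hx.2⟩
      rw [(step9 x hx.1).1] at hgfil
      rcases Finset.mem_insert.mp hgfil with h | h
      · exact absurd h.symm hne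
      · exact ⟨(Finset.mem_filter.mp h).1, hne, ⟨x, Finset.mem_inter.mpr hx⟩⟩
    have heq : nbrs Adj E e = nbrs Adj F e :=
      subset_antisymm hsub1 (nbrs_mono hFE e)
    rw [heq]
    refine le_antisymm ?_ hbadE
    calc (nbrs Adj F e).card ≤ S := hnbrS
      _ = D + 1 := hSeq
  · intro x hx g hgE hxg
    have hgfil : g ∈ E.filter (fun g => x ∈ g) := Finset.mem_filter.mpr ⟨hgE, hxg⟩
    rw [(step9 x hx).1] at hgfil
    rcases Finset.mem_insert.mp hgfil with h | h
    · exact Or.inl h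
    · refine Or.inr ⟨(Finset.mem_filter.mp h).1, ?_⟩
      rw [← hka]
      exact (step9 x hx).2 g h
  · intro x hx
    rw [(step9 x hx).1, Finset.card_insert_of_notMem (heFx x), ← hka]
    have := step8 x hx
    omega


/-- From a bad family extract a rigid, `E`-closed subfamily. -/
lemma cnt (E : Finset (Finset V)) (hE : E.Nonempty) (hloopless : ∀ e ∈ E, 2 ≤ e.card)
    (har : (E.inf' hE Finset.card) ^ 2 ≥ maxDeg2 E + 1)
    {F : Finset (Finset V)} (hFE : F ⊆ E) (hFne : F.Nonempty)
    (hbad : ∀ z ∈ F, maxDeg2 E + 1 ≤ (nbrs Adj F z).card) :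
    ∃ C' : Finset (Finset V), C' ⊆ F ∧ C'.Nonempty ∧
      maxDeg2 E + 1 = (E.inf' hE Finset.card) ^ 2 ∧
      (∀ f ∈ C', ∀ g ∈ E, Adj f g → g ∈ C') ∧
      (∀ f ∈ C', f.card = E.inf' hE Finset.card ∧
        (nbrs Adj E f).card = maxDeg2 E + 1 ∧
        ∀ x ∈ f, (E.filter (fun g => x ∈ g)).card = E.inf' hE Finset.card + 1 ∧
          (E.filter (fun g => x ∈ g)) ⊆ C') := by
  set D := maxDeg2 E with hD
  set a := E.inf' hE Finset.card with ha
  set C' : Finset (Finset V) := F.filter (fun f => f.card = a) with hC'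
  have hmin : ∀ f ∈ C', ∀ g ∈ F, f.card ≤ g.card := by
    intro f hf g hg
    have h2 : f.card = a := (Finset.mem_filter.mp hf).2
    rw [h2]
    exact Finset.inf'_le _ (hFE hg)
  have hrigf : ∀ f ∈ C',
      f.card = a ∧ D + 1 = a ^ 2 ∧ (nbrs Adj E f).card = D + 1 ∧
      (∀ x ∈ f, ∀ g ∈ E, x ∈ g → g = f ∨ (g ∈ F ∧ g.card = a)) ∧
      (∀ x ∈ f, (E.filter (fun g => x ∈ g)).card = a + 1) := by
    intro f hf
    exact rig E hE hloopless har hFE (Finset.mem_filter.mp hf).1 (hmin f hf)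
      (hbad f (Finset.mem_filter.mp hf).1)
  have hC'ne : C'.Nonempty := by
    obtain ⟨e, heF, hemin⟩ := Finset.exists_min_image F Finset.card hFne
    have := rig E hE hloopless har hFE heF hemin (hbad e heF)
    exact ⟨e, Finset.mem_filter.mpr ⟨heF, this.1⟩⟩
  obtain ⟨e₀, he₀⟩ := hC'ne
  refine ⟨C', Finset.filter_subset _ _, ⟨e₀, he₀⟩, (hrigf e₀ he₀).2.1, ?_, ?_⟩
  · -- closure
    intro f hf g hgE hadj
    obtain ⟨x, hx⟩ := hadj.2
    rw [Finset.mem_inter] at hx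
    rcases (hrigf f hf).2.2.2.1 x hx.1 g hgE hx.2 with h | h
    · exact absurd h.symm hadj.1
    · exact Finset.mem_filter.mpr h
  · intro f hf
    refine ⟨(hrigf f hf).1, (hrigf f hf).2.2.1, ?_⟩
    intro x hx
    refine ⟨(hrigf f hf).2.2.2.2 x hx, ?_⟩
    intro g hg
    have hgE : g ∈ E := (Finset.mem_filter.mp hg).1
    have hxg : x ∈ g := (Finset.mem_filter.mp hg).2
    rcases (hrigf f hf).2.2.2.1 x hx g hgE hxg with h | h
    · exact h ▸ hf
    · exact Finset.mem_filter.mpr h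

/-- Counting contradiction: a complete rigid component cannot exist. -/
lemma count_contra {C : Finset (Finset V)} {a : ℕ} (ha : 2 ≤ a)
    (hcard : ∀ f ∈ C, f.card = a)
    (hvdeg : ∀ f ∈ C, ∀ x ∈ f, (C.filter (fun g => x ∈ g)).card = a + 1)
    (hC : C.card = a ^ 2 + 1) : False := by
  set X : Finset V := C.biUnion id with hX
  have hfsub : ∀ f ∈ C, f ⊆ X := by
    intro f hf y hy
    exact Finset.mem_biUnion.mpr ⟨f, hf, hy⟩
  have hdouble : ∑ f ∈ C, f.card = ∑ x ∈ X, (C.filter (fun g => x ∈ g)).card := by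
    have hfeq : ∀ f ∈ C, X.filter (fun x => x ∈ f) = f := by
      intro f hf
      apply subset_antisymm
      · intro y hy
        exact (Finset.mem_filter.mp hy).2
      · intro y hy
        exact Finset.mem_filter.mpr ⟨hfsub f hf hy, hy⟩
    have h1 : ∀ f ∈ C, f.card = ∑ x ∈ X, (if x ∈ f then 1 else 0) := by
      intro f hf
      rw [Finset.sum_boole]
      rw [hfeq f hf]
      simp
    have h2 : ∀ x ∈ X, (C.filter (fun g => x ∈ g)).card = ∑ f ∈ C, (if x ∈ f then 1 else 0) := by
      intro x hx
      rw [Finset.sum_boole]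
      simp
    calc ∑ f ∈ C, f.card = ∑ f ∈ C, ∑ x ∈ X, (if x ∈ f then 1 else 0) :=
          Finset.sum_congr rfl h1
      _ = ∑ x ∈ X, ∑ f ∈ C, (if x ∈ f then 1 else 0) := Finset.sum_comm
      _ = ∑ x ∈ X, (C.filter (fun g => x ∈ g)).card := by
          refine Finset.sum_congr rfl ?_
          intro x hx
          exact (h2 x hx).symm
  have hxdeg : ∀ x ∈ X, (C.filter (fun g => x ∈ g)).card = a + 1 := by
    intro x hx
    obtain ⟨f, hf, hxf⟩ := Finset.mem_biUnion.mp hx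
    exact hvdeg f hf x hxf
  have hlhs : ∑ f ∈ C, f.card = a * (a ^ 2 + 1) := by
    rw [Finset.sum_congr rfl hcard, Finset.sum_const, smul_eq_mul, hC, mul_comm]
  have hrhs : ∑ x ∈ X, (C.filter (fun g => x ∈ g)).card = X.card * (a + 1) := by
    rw [Finset.sum_congr rfl hxdeg, Finset.sum_const, smul_eq_mul]
  have hdvd : (a + 1) ∣ a * (a ^ 2 + 1) := by
    rw [← hlhs, hdouble, hrhs]
    exact Dvd.intro_left _ rfl
  have hdvdZ : ((a : ℤ) + 1) ∣ ((a : ℤ) * ((a : ℤ) ^ 2 + 1)) := by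
    have := Int.natCast_dvd_natCast.mpr hdvd
    push_cast at this
    exact_mod_cast this
  have hdvd2 : ((a : ℤ) + 1) ∣ 2 := by
    have h2 : ((a : ℤ) + 1) ∣ ((a : ℤ) * ((a : ℤ) ^ 2 + 1) + 2) :=
      ⟨(a : ℤ) ^ 2 - (a : ℤ) + 2, by ring⟩
    have := dvd_sub h2 hdvdZ
    simpa using this
  have hle : ((a : ℤ) + 1) ≤ 2 := Int.le_of_dvd (by norm_num) hdvd2
  have : (2 : ℤ) ≤ (a : ℤ) := by exact_mod_cast ha
  omega


/-- The main coloring theorem: `E` admits a proper `(Δ₂+1)`-coloring of its line graph. -/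
lemma main_coloring (E : Finset (Finset V)) (hE : E.Nonempty)
    (hloopless : ∀ e ∈ E, 2 ≤ e.card)
    (har : (E.inf' hE Finset.card) ^ 2 ≥ maxDeg2 E + 1) :
    ∃ c, Pcol Adj E (maxDeg2 E + 1) c := by
  set D := maxDeg2 E with hD
  set a := E.inf' hE Finset.card with ha
  have ha2 : 2 ≤ a := Finset.le_inf' hE _ (fun f hf => hloopless f hf)
  apply glue_comps adj_symm
  intro x hx
  set B : Finset (Finset V) :=
    E.filter (fun e => ∀ f ∈ comp Adj E e, D + 1 ≤ (nbrs Adj E f).card) with hB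
  by_cases hxB : x ∈ B
  · -- rigid component : Brooks
    set C := comp Adj E x with hC
    have hCE : C ⊆ E := comp_subset
    have hCne : C.Nonempty := ⟨x, mem_comp_self hx⟩
    have hnbrs_eq : ∀ z ∈ C, nbrs Adj C z = nbrs Adj E z := by
      intro z hz
      apply subset_antisymm (nbrs_mono hCE z)
      intro g hg
      rw [mem_nbrs] at hg ⊢
      exact ⟨comp_closed hz ⟨hg.2, hCE hz, hg.1⟩, hg.2⟩
    have hbad : ∀ z ∈ C, D + 1 ≤ (nbrs Adj C z).card := by
      intro z hz
      rw [hnbrs_eq z hz]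
      exact (Finset.mem_filter.mp hxB).2 z hz
    obtain ⟨C', hC'sub, hC'ne, hDa, hC'closed, hC'facts⟩ :=
      cnt E hE hloopless har hCE hCne hbad
    rw [← ha, ← hD] at hDa
    have hC'eq : C' = C := by
      refine subset_antisymm hC'sub ?_
      obtain ⟨e₀, he₀⟩ := hC'ne
      have he₀C : e₀ ∈ C := hC'sub he₀
      have hcompeq : comp Adj E e₀ = comp Adj E x := comp_eq_of_mem adj_symm he₀C
      rw [hC, ← hcompeq]
      exact comp_subset_closed he₀ (fun p hp q hst => hC'closed p hp q hst.2.2 hst.1)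
    have hreg : ∀ z ∈ C, (nbrs Adj C z).card = D + 1 := by
      intro z hz
      rw [hnbrs_eq z hz]
      exact (hC'facts z (hC'eq ▸ hz)).2.1
    have hr3 : 3 ≤ D + 1 := by
      have h4 : 4 ≤ a ^ 2 := by nlinarith
      omega
    have hconnC : Conn Adj C := conn_comp adj_symm
    by_cases hcomp : ∃ p ∈ C, ∃ q ∈ C, p ≠ q ∧ ¬ Adj p q
    · exact brooks_reg adj_symm adj_irr hconnC hreg hr3 hcomp
    · exfalso
      push_neg at hcomp
      have hxC : x ∈ C := mem_comp_self hx
      have hnbrsx : nbrs Adj C x = C.erase x := by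
        apply subset_antisymm
        · intro g hg
          rw [mem_nbrs] at hg
          exact Finset.mem_erase.mpr ⟨fun h => hg.2.1 h.symm, hg.1⟩
        · intro g hg
          rw [mem_nbrs]
          exact ⟨(Finset.mem_erase.mp hg).2,
            hcomp x hxC g (Finset.mem_erase.mp hg).2 (fun h => (Finset.mem_erase.mp hg).1 h.symm)⟩
      have hcardC : C.card = a ^ 2 + 1 := by
        have h1 : (nbrs Adj C x).card = D + 1 := hreg x hxC
        rw [hnbrsx, Finset.card_erase_of_mem hxC] at h1
        have h2 : 1 ≤ C.card := Finset.card_pos.mpr ⟨x, hxC⟩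
        omega
      refine count_contra ha2 (fun f hf => (hC'facts f (hC'eq ▸ hf)).1) ?_ hcardC
      intro f hf x' hx'
      have hfacts := (hC'facts f (hC'eq ▸ hf)).2.2 x' hx'
      have hCeq : C.filter (fun g => x' ∈ g) = E.filter (fun g => x' ∈ g) := by
        apply subset_antisymm
        · exact Finset.filter_subset_filter _ hCE
        · intro g hg
          refine Finset.mem_filter.mpr ⟨?_, (Finset.mem_filter.mp hg).2⟩
          exact hC'eq ▸ (hfacts.2 hg)
      rw [hCeq]
      exact hfacts.1
  · -- degenerate component : greedy engine
    have hengine := engine (adj_symm (V := V)) adj_irr (D + 1) ∅ (fun _ => 0)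
      ⟨fun z hz => absurd hz (Finset.notMem_empty z),
       fun z hz => absurd hz (Finset.notMem_empty z)⟩ (comp Adj E x)
      (Finset.disjoint_empty_right _) ?_
    · obtain ⟨col, -, hcol⟩ := hengine
      rw [Finset.union_empty] at hcol
      exact ⟨col, hcol⟩
    · intro F hF hFne
      by_cases hlow : ∃ z ∈ F, (nbrs Adj F z).card ≤ D
      · obtain ⟨z, hzF, hzlow⟩ := hlow
        refine ⟨z, hzF, Or.inl ?_⟩
        have hsub : nbrs Adj (F.erase z ∪ ∅) z ⊆ nbrs Adj F z := by
          apply nbrs_mono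
          rw [Finset.union_empty]
          exact Finset.erase_subset _ _
        calc (nbrs Adj (F.erase z ∪ ∅) z).card ≤ (nbrs Adj F z).card :=
              Finset.card_le_card hsub
          _ ≤ D := hzlow
          _ < D + 1 := by omega
      · exfalso
        push_neg at hlow
        have hFE : F ⊆ E := hF.trans comp_subset
        obtain ⟨C', hC'sub, hC'ne, hDa, hC'closed, hC'facts⟩ :=
          cnt E hE hloopless har hFE hFne (fun z hz => hlow z hz)
        apply hxB
        refine Finset.mem_filter.mpr ⟨hx, ?_⟩
        obtain ⟨e₀, he₀⟩ := hC'ne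
        have he₀C : e₀ ∈ comp Adj E x := hF (hC'sub he₀)
        have hcompeq : comp Adj E e₀ = comp Adj E x := comp_eq_of_mem adj_symm he₀C
        have hsubC' : comp Adj E x ⊆ C' := by
          rw [← hcompeq]
          exact comp_subset_closed he₀ (fun p hp q hst => hC'closed p hp q hst.2.2 hst.1)
        intro f hf
        have h1 := (hC'facts f (hsubC' hf)).2.1
        rw [← hD] at h1
        omega

end Hyper

theorem stmt_0' {V : Type*} [Fintype V] [DecidableEq V] (E : Finset (Finset V))
    (hE : E.Nonempty) (hloopless : ∀ e ∈ E, 2 ≤ e.card)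
    (har : (E.inf' hE Finset.card) ^ 2 ≥ maxDeg2 E + 1) :
    chromIndex E ≤ maxDeg2 E + 1 := by
  obtain ⟨c0, hc0⟩ := main_coloring E hE hloopless har
  have hmem : (maxDeg2 E + 1) ∈ {q | ∃ c, IsProperColoring E q c} := by
    refine ⟨fun e => c0 e + 1, ?_, ?_⟩
    · intro e he
      rw [Finset.mem_Icc]
      have h := hc0.1 e he
      constructor
      · show 1 ≤ c0 e + 1
        omega
      · show c0 e + 1 ≤ maxDeg2 E + 1
        omega
    · intro e he e' he' hcc
      by_cases hee : e = e'
      · exact Or.inr hee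
      · by_cases hint : (e ∩ e').Nonempty
        · exfalso
          have hcc' : c0 e + 1 = c0 e' + 1 := hcc
          exact hc0.2 e he e' he' ⟨hee, hint⟩ (by omega)
        · exact Or.inl (Finset.not_nonempty_iff_eq_empty.mp hint)
  exact Nat.sInf_le hmem


end HGB

/-- if `ar(H)² ≥ Δ₂(H) + 1` then `q(H) ≤ Δ₂(H) + 1`. -/
theorem stmt_0 {V : Type*} [Fintype V] [DecidableEq V] (E : Finset (Finset V))
    (hE : E.Nonempty) (hloopless : ∀ e ∈ E, 2 ≤ e.card)
    (har : (E.inf' hE Finset.card) ^ 2 ≥ maxDeg2 E + 1) :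
    chromIndex E ≤ maxDeg2 E + 1 := by
  exact HGB.stmt_0' E hE hloopless har
end

section
/- Let H = (V,E) be a finite loopless hypergraph (every hyperedge has at least 2 vertices) with E nonempty, and suppose that the maximum degree satisfies (Δ(H) − 1)² ≤ Δ₂(H) + 1 (equivalently Δ(H) ≤ √(Δ₂(H)+1) + 1). Then q(H) ≤ Δ₂(H) + 1. -/
/-!
Colour the hyperedges, i.e. the vertices of the intersection graph, with `D = Δ₂ + 1` colours by
induction on the family; put `t = Δ - 1`. A hyperedge meeting fewer than `D` others is coloured
last. Otherwise double counting around a hyperedge `e` of minimum size, whose vertices lie in at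
most `t` further hyperedges and satisfy `vdeg x * (#e - 1) ≤ deg2 x < D`, gives together with
`t² ≤ D` that `#e = t` and `D = t²`, and the equality case makes the structure rigid: every
hyperedge of minimum size meets exactly `D` others, all of minimum size and each in one vertex.
So the minimum hyperedges form a union of components of the intersection graph of maximum
degree `D`, and there a hyperedge has two disjoint neighbours. The colouring step of Brooks'
theorem colours these components with `D` colours, since all their proper subfamilies are
`D`-colourable by induction.
-/

open Finset

lemma exists_perm_mapsTo_Icc {D a b a' b' : ℕ} (ha : a ∈ Icc 1 D) (hb : b ∈ Icc 1 D)
    (ha' : a' ∈ Icc 1 D) (hb' : b' ∈ Icc 1 D) (hab : a = b ↔ a' = b') :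
    ∃ π : Equiv.Perm ℕ, π a = a' ∧ π b = b' ∧ Set.MapsTo π (Icc 1 D) (Icc 1 D) := by
  have hswap {x y : ℕ} (hx : x ∈ Icc 1 D) (hy : y ∈ Icc 1 D) :
      Set.MapsTo (Equiv.swap x y) (Icc 1 D) (Icc 1 D) := by
    intro z hz
    rw [Equiv.swap_apply_def]
    split_ifs <;> assumption
  set σ := Equiv.swap a a'
  have hσb : σ b ∈ Icc 1 D := hswap ha ha' hb
  refine ⟨σ.trans (Equiv.swap (σ b) b'), ?_, Equiv.swap_apply_left _ _,
    (hswap hσb hb').comp (hswap ha ha')⟩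
  rw [Equiv.trans_apply, Equiv.swap_apply_left]
  by_cases h : a = b
  · rw [← hab.mp h, ← h, Equiv.swap_apply_left, Equiv.swap_self, Equiv.refl_apply]
  · refine Equiv.swap_apply_of_ne_of_ne ?_ (mt hab.mpr h)
    intro hσ
    exact h (σ.injective (by rw [← hσ, Equiv.swap_apply_left]))

namespace SimpleGraph

variable {α : Type*} {G : SimpleGraph α}

variable (G) in
def IsProperOn (D : ℕ) (s : Finset α) (c : α → ℕ) : Prop :=
  (∀ a ∈ s, c a ∈ Icc 1 D) ∧ ∀ a ∈ s, ∀ b ∈ s, G.Adj a b → c a ≠ c b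

variable {D : ℕ} {s t : Finset α} {c c₁ c₂ : α → ℕ}

namespace IsProperOn

lemma perm_comp (hc : G.IsProperOn D s c) {π : Equiv.Perm ℕ}
    (hπ : Set.MapsTo π (Icc 1 D) (Icc 1 D)) : G.IsProperOn D s (π ∘ c) :=
  ⟨fun a ha => hπ (hc.1 a ha), fun a ha b hb hab => π.injective.ne (hc.2 a ha b hb hab)⟩

variable [DecidableEq α]

lemma update_insert (hc : G.IsProperOn D s c) {a : α} {δ : ℕ} (hδ : δ ∈ Icc 1 D)
    (hfresh : ∀ b ∈ s, G.Adj a b → c b ≠ δ) :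
    G.IsProperOn D (insert a s) (Function.update c a δ) := by
  refine ⟨fun b hb => ?_, fun b hb b' hb' hbb' => ?_⟩
  · rcases eq_or_ne b a with rfl | hba
    · rwa [Function.update_self]
    · simpa [hba] using hc.1 b ((mem_insert.mp hb).resolve_left hba)
  · have hs : ∀ x ∈ insert a s, x ≠ a → x ∈ s := fun x hx hxa =>
      (mem_insert.mp hx).resolve_left hxa
    rcases eq_or_ne b a with rfl | hba <;> rcases eq_or_ne b' b with rfl | hb'b
    · exact absurd hbb' G.irrefl
    · simpa [hb'b] using (hfresh b' (hs b' hb' hb'b) hbb').symm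
    · exact absurd hbb' G.irrefl
    · rcases eq_or_ne b' a with rfl | hb'a
      · simpa [hba] using hfresh b (hs b hb hba) hbb'.symm
      · simpa [hba, hb'a] using hc.2 b (hs b hb hba) b' (hs b' hb' hb'a) hbb'

lemma piecewise (hc₁ : G.IsProperOn D s c₁) (hc₂ : G.IsProperOn D t c₂)
    (hagree : ∀ a ∈ s, a ∈ t → c₁ a = c₂ a)
    (hsep : ∀ a ∈ s, ∀ b ∈ t, G.Adj a b → a ∈ t ∨ b ∈ s) :
    G.IsProperOn D (s ∪ t) (s.piecewise c₁ c₂) := by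
  have key : ∀ a ∈ s, ∀ b ∈ s ∪ t, G.Adj a b → c₁ a ≠ s.piecewise c₁ c₂ b := by
    intro a ha b hb hab
    by_cases hbs : b ∈ s
    · simpa [hbs] using hc₁.2 a ha b hbs hab
    · have hbt := (mem_union.mp hb).resolve_left hbs
      have hat := (hsep a ha b hbt hab).resolve_right hbs
      simpa [hbs, hagree a ha hat] using hc₂.2 a hat b hbt hab
  refine ⟨fun a ha => ?_, fun a ha b hb hab => ?_⟩
  · by_cases has : a ∈ s
    · simpa [has] using hc₁.1 a has
    · simpa [has] using hc₂.1 a ((mem_union.mp ha).resolve_left has)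
  · by_cases has : a ∈ s
    · simpa [has] using key a has b hb hab
    by_cases hbs : b ∈ s
    · simpa [hbs, has, eq_comm] using key b hbs a ha hab.symm
    · simpa [has, hbs] using hc₂.2 a ((mem_union.mp ha).resolve_left has)
        b ((mem_union.mp hb).resolve_left hbs) hab

variable [DecidableRel G.Adj]

lemma exists_update_insert (hc : G.IsProperOn D s c) {a : α}
    (hlt : #({b ∈ s | G.Adj a b}.image c) < D) :
    ∃ δ, G.IsProperOn D (insert a s) (Function.update c a δ) := by
  obtain ⟨δ, hδ, hfresh⟩ :=
    exists_mem_notMem_of_card_lt_card (t := Icc 1 D) (by simpa using hlt)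
  exact ⟨δ, hc.update_insert hδ fun b hb hab hcb =>
    hfresh (mem_image.mpr ⟨b, mem_filter.mpr ⟨hb, hab⟩, hcb⟩)⟩

lemma exists_apply_ne (hc : G.IsProperOn D s c) {u v : α} (hu : u ∈ s) (huv : u ≠ v)
    (hdeg : #{b ∈ s | G.Adj u b} + 2 ≤ D) : ∃ c', G.IsProperOn D s c' ∧ c' u ≠ c' v := by
  have hlt : #(insert (c v) ({b ∈ s | G.Adj u b}.image c)) < #(Icc 1 D) := by
    have := card_insert_le (c v) ({b ∈ s | G.Adj u b}.image c)
    have := card_image_le (s := {b ∈ s | G.Adj u b}) (f := c)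
    simp only [Nat.card_Icc]
    omega
  obtain ⟨δ, hδ, hfresh⟩ := exists_mem_notMem_of_card_lt_card hlt
  refine ⟨Function.update c u δ, insert_eq_of_mem hu ▸ hc.update_insert hδ ?_, ?_⟩
  · exact fun b hb hub hcb =>
      hfresh (mem_insert_of_mem (mem_image.mpr ⟨b, by simp [hb, hub], hcb⟩))
  · rw [Function.update_self, Function.update_of_ne huv.symm]
    exact fun h => hfresh (h ▸ mem_insert_self _ _)

lemma exists_apply_eq (hc : G.IsProperOn D s c) {u v : α} (hu : u ∈ s) (hv : v ∈ s)
    (huv : ¬ G.Adj u v) (hdeg : #{b ∈ s | G.Adj u b} + #{b ∈ s | G.Adj v b} < D) :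
    ∃ c', G.IsProperOn D s c' ∧ c' u = c' v := by
  have hlt : #(({b ∈ s | G.Adj u b} ∪ {b ∈ s | G.Adj v b}).image c) < #(Icc 1 D) := by
    have := card_union_le {b ∈ s | G.Adj u b} {b ∈ s | G.Adj v b}
    have := card_image_le (s := {b ∈ s | G.Adj u b} ∪ {b ∈ s | G.Adj v b}) (f := c)
    simp only [Nat.card_Icc]
    omega
  obtain ⟨δ, hδ, hfresh⟩ := exists_mem_notMem_of_card_lt_card hlt
  have hc' := insert_eq_of_mem hu ▸ hc.update_insert hδ fun b hb hub hcb =>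
    hfresh (mem_image.mpr ⟨b, by simp [hb, hub], hcb⟩)
  have hfresh' : ∀ b ∈ s, G.Adj v b → Function.update c u δ b ≠ δ := by
    intro b hb hvb hcb
    have hbu : b ≠ u := by rintro rfl; exact huv hvb.symm
    rw [Function.update_of_ne hbu] at hcb
    exact hfresh (mem_image.mpr ⟨b, by simp [hb, hvb], hcb⟩)
  refine ⟨_, insert_eq_of_mem hv ▸ hc'.update_insert hδ hfresh', ?_⟩
  rw [Function.update_apply]
  split_ifs <;> simp

lemma exists_same_pattern_of_eq_of_ne (hD : 3 ≤ D) {s₁ s₂ : Finset α} {u v : α}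
    (hu₁ : u ∈ s₁) (hv₁ : v ∈ s₁) (hu₂ : u ∈ s₂) (hv₂ : v ∈ s₂) (huv : ¬ G.Adj u v)
    (hne : u ≠ v) (hdu : #{b ∈ s₁ | G.Adj u b} + #{b ∈ s₂ | G.Adj u b} ≤ D)
    (hdv : #{b ∈ s₁ | G.Adj v b} + #{b ∈ s₂ | G.Adj v b} ≤ D)
    (hc₁ : G.IsProperOn D s₁ c₁) (hc₂ : G.IsProperOn D s₂ c₂)
    (h₁ : c₁ u = c₁ v) (h₂ : c₂ u ≠ c₂ v) :
    ∃ c₁' c₂', G.IsProperOn D s₁ c₁' ∧ G.IsProperOn D s₂ c₂' ∧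
      (c₁' u = c₁' v ↔ c₂' u = c₂' v) := by
  by_cases hu : #{b ∈ s₁ | G.Adj u b} + 2 ≤ D
  · obtain ⟨c, hc, hcuv⟩ := hc₁.exists_apply_ne hu₁ hne hu
    exact ⟨c, c₂, hc, hc₂, iff_of_false hcuv h₂⟩
  by_cases hv : #{b ∈ s₁ | G.Adj v b} + 2 ≤ D
  · obtain ⟨c, hc, hcvu⟩ := hc₁.exists_apply_ne hv₁ hne.symm hv
    exact ⟨c, c₂, hc, hc₂, iff_of_false hcvu.symm h₂⟩
  obtain ⟨c, hc, hcuv⟩ := hc₂.exists_apply_eq hu₂ hv₂ huv (by omega)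
  exact ⟨c₁, c, hc₁, hc, iff_of_true h₁ hcuv⟩

lemma exists_same_pattern (hD : 3 ≤ D) {s₁ s₂ : Finset α} {u v : α}
    (hu₁ : u ∈ s₁) (hv₁ : v ∈ s₁) (hu₂ : u ∈ s₂) (hv₂ : v ∈ s₂) (huv : ¬ G.Adj u v)
    (hne : u ≠ v) (hdu : #{b ∈ s₁ | G.Adj u b} + #{b ∈ s₂ | G.Adj u b} ≤ D)
    (hdv : #{b ∈ s₁ | G.Adj v b} + #{b ∈ s₂ | G.Adj v b} ≤ D)
    (hc₁ : G.IsProperOn D s₁ c₁) (hc₂ : G.IsProperOn D s₂ c₂) :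
    ∃ c₁' c₂', G.IsProperOn D s₁ c₁' ∧ G.IsProperOn D s₂ c₂' ∧
      (c₁' u = c₁' v ↔ c₂' u = c₂' v) := by
  by_cases h₁ : c₁ u = c₁ v <;> by_cases h₂ : c₂ u = c₂ v
  · exact ⟨c₁, c₂, hc₁, hc₂, iff_of_true h₁ h₂⟩
  · exact exists_same_pattern_of_eq_of_ne hD hu₁ hv₁ hu₂ hv₂ huv hne hdu hdv hc₁ hc₂ h₁ h₂
  · obtain ⟨c₂', c₁', hc₂', hc₁', hiff⟩ := exists_same_pattern_of_eq_of_ne hD hu₂ hv₂ hu₁ hv₁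
      huv hne (by omega) (by omega) hc₂ hc₁ h₂ h₁
    exact ⟨c₁', c₂', hc₁', hc₂', hiff.symm⟩
  · exact ⟨c₁, c₂, hc₁, hc₂, iff_of_false h₁ h₂⟩

/-- Greedy colouring of `t` in order of decreasing potential `p`: each vertex still has an
uncoloured neighbour when its turn comes, and the last one, `r`, sees two neighbours
`u`, `v` of the same colour. -/
lemma exists_extend_greedy {C t : Finset α} {r u v : α} {p : α → ℕ}
    (hdeg : ∀ w ∈ C, #{y ∈ C | G.Adj w y} ≤ D) (htC : t ⊆ C) (hr : r ∈ t)
    (hp : ∀ w ∈ t, w ≠ r → ∃ y ∈ t, G.Adj w y ∧ p y < p w)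
    (hu : u ∈ C \ t) (hv : v ∈ C \ t) (hru : G.Adj r u) (hrv : G.Adj r v) (hne : u ≠ v)
    (hc : G.IsProperOn D (C \ t) c) (hcuv : c u = c v) : ∃ c', G.IsProperOn D C c' := by
  induction t using Finset.strongInduction generalizing c with
  | H t ih =>
  by_cases hrt : t.erase r = ∅
  · set N := {b ∈ C \ t | G.Adj r b}
    have huN : u ∈ N := mem_filter.mpr ⟨hu, hru⟩
    have hvN : v ∈ N := mem_filter.mpr ⟨hv, hrv⟩
    have himg : #(N.image c) < #N :=
      lt_of_le_of_ne card_image_le fun h => hne (card_image_iff.mp h huN hvN hcuv)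
    have hN : #N ≤ D :=
      (card_le_card (filter_subset_filter _ sdiff_subset)).trans (hdeg r (htC hr))
    obtain ⟨δ, hδ⟩ := hc.exists_update_insert (a := r) (himg.trans_le hN)
    rw [← sdiff_erase (htC hr), hrt, sdiff_empty] at hδ
    exact ⟨_, hδ⟩
  obtain ⟨w, hw, hwmax⟩ := (t.erase r).exists_max_image p (nonempty_iff_ne_empty.mpr hrt)
  obtain ⟨hwr, hwt⟩ := mem_erase.mp hw
  obtain ⟨y, hyt, hwy, hpy⟩ := hp w hwt hwr
  have hcol : {b ∈ C \ t | G.Adj w b} ⊆ {b ∈ C | G.Adj w b}.erase y := by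
    intro b hb
    obtain ⟨hb, hwb⟩ := mem_filter.mp hb
    exact mem_erase.mpr ⟨by rintro rfl; exact (mem_sdiff.mp hb).2 hyt,
      mem_filter.mpr ⟨(mem_sdiff.mp hb).1, hwb⟩⟩
  have hyN : y ∈ {b ∈ C | G.Adj w b} := mem_filter.mpr ⟨htC hyt, hwy⟩
  obtain ⟨δ, hδ⟩ := hc.exists_update_insert (a := w) <| by
    have := card_erase_of_mem hyN
    have := card_le_card hcol
    have := card_pos.mpr ⟨y, hyN⟩
    have := card_image_le (s := {b ∈ C \ t | G.Adj w b}) (f := c)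
    have := hdeg w (htC hwt)
    omega
  rw [← sdiff_erase (htC hwt)] at hδ
  have hwu : w ≠ u := by rintro rfl; exact (mem_sdiff.mp hu).2 hwt
  have hwv : w ≠ v := by rintro rfl; exact (mem_sdiff.mp hv).2 hwt
  refine ih (t.erase w) (erase_ssubset hwt) ((erase_subset _ _).trans htC)
    (mem_erase.mpr ⟨Ne.symm hwr, hr⟩) (fun x hx hxr => ?_) ?_ ?_ hδ ?_
  · obtain ⟨hxw, hxt⟩ := mem_erase.mp hx
    obtain ⟨y', hy't, hxy', hpy'⟩ := hp x hxt hxr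
    have := hwmax x (mem_erase.mpr ⟨hxr, hxt⟩)
    exact ⟨y', mem_erase.mpr ⟨by rintro rfl; omega, hy't⟩, hxy', hpy'⟩
  · exact mem_sdiff.mpr ⟨(mem_sdiff.mp hu).1, fun h => (mem_sdiff.mp hu).2 (mem_of_mem_erase h)⟩
  · exact mem_sdiff.mpr ⟨(mem_sdiff.mp hv).1, fun h => (mem_sdiff.mp hv).2 (mem_of_mem_erase h)⟩
  · rw [Function.update_of_ne hwu.symm, Function.update_of_ne hwv.symm, hcuv]

end IsProperOn

variable [DecidableEq α] [DecidableRel G.Adj]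

lemma card_filter_adj_add_card_filter_adj_le {s₁ s₂ : Finset α} (h₁ : s₁ ⊆ s) (h₂ : s₂ ⊆ s)
    {x : α} (hx : ∀ b ∈ s₁, b ∈ s₂ → ¬ G.Adj x b) :
    #{b ∈ s₁ | G.Adj x b} + #{b ∈ s₂ | G.Adj x b} ≤ #{b ∈ s | G.Adj x b} := by
  rw [← card_union_of_disjoint]
  · exact card_le_card (union_subset (filter_subset_filter _ h₁) (filter_subset_filter _ h₂))
  · refine Finset.disjoint_left.mpr fun b hb₁ hb₂ => ?_
    exact hx b (mem_filter.mp hb₁).1 (mem_filter.mp hb₂).1 (mem_filter.mp hb₁).2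

/-- Recolour one piece so that `u`, `v` get equal colours in both pieces or in neither, then
permute the colours of the second piece to agree with the first at `u` and `v`. -/
lemma exists_isProperOn_union (hD : 3 ≤ D) {s₁ s₂ : Finset α} {u v : α}
    (hu₁ : u ∈ s₁) (hv₁ : v ∈ s₁) (hu₂ : u ∈ s₂) (hv₂ : v ∈ s₂) (huv : ¬ G.Adj u v)
    (hne : u ≠ v) (hinter : ∀ a ∈ s₁, a ∈ s₂ → a = u ∨ a = v)
    (hsep : ∀ a ∈ s₁, ∀ b ∈ s₂, G.Adj a b → a ∈ s₂ ∨ b ∈ s₁)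
    (hdu : #{b ∈ s₁ ∪ s₂ | G.Adj u b} ≤ D) (hdv : #{b ∈ s₁ ∪ s₂ | G.Adj v b} ≤ D)
    (hc₁ : G.IsProperOn D s₁ c₁) (hc₂ : G.IsProperOn D s₂ c₂) :
    ∃ c, G.IsProperOn D (s₁ ∪ s₂) c := by
  have hsplit : ∀ x, x = u ∨ x = v →
      #{b ∈ s₁ | G.Adj x b} + #{b ∈ s₂ | G.Adj x b} ≤ #{b ∈ s₁ ∪ s₂ | G.Adj x b} := by
    refine fun x hx => card_filter_adj_add_card_filter_adj_le subset_union_left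
      subset_union_right fun b hb₁ hb₂ hxb => ?_
    rcases hx with rfl | rfl <;> rcases hinter b hb₁ hb₂ with rfl | rfl
    exacts [G.irrefl hxb, huv hxb, huv hxb.symm, G.irrefl hxb]
  obtain ⟨c₁', c₂', hc₁', hc₂', hiff⟩ := IsProperOn.exists_same_pattern hD hu₁ hv₁ hu₂ hv₂
    huv hne ((hsplit u (.inl rfl)).trans hdu) ((hsplit v (.inr rfl)).trans hdv) hc₁ hc₂
  obtain ⟨π, hπu, hπv, hπ⟩ := exists_perm_mapsTo_Icc (hc₂'.1 u hu₂) (hc₂'.1 v hv₂)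
    (hc₁'.1 u hu₁) (hc₁'.1 v hv₁) hiff.symm
  refine ⟨_, hc₁'.piecewise (hc₂'.perm_comp hπ) (fun a ha₁ ha₂ => ?_) hsep⟩
  rcases hinter a ha₁ ha₂ with rfl | rfl
  exacts [hπu.symm, hπv.symm]

lemma exists_isProperOn_of_reachable {C : Finset α}
    (hdeg : ∀ w ∈ C, #{y ∈ C | G.Adj w y} ≤ D) {r u v : α} (hr : r ∈ C) (hu : u ∈ C)
    (hv : v ∈ C) (hru : G.Adj r u) (hrv : G.Adj r v) (huv : ¬ G.Adj u v) (hne : u ≠ v)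
    (hreach : ∀ w ∈ C \ {u, v}, (G.induce (C \ {u, v} : Set α)).spanningCoe.Reachable w r) :
    ∃ c, G.IsProperOn D C c := by
  set H := (G.induce (C \ {u, v} : Set α)).spanningCoe
  have hD : 1 ≤ D := (card_pos.mpr ⟨u, mem_filter.mpr ⟨hu, hru⟩⟩).trans_le (hdeg r hr)
  have hr' : r ∈ C \ {u, v} := by simp [hr, hru.ne, hrv.ne]
  have hc₀ : G.IsProperOn D (C \ (C \ {u, v})) fun _ => 1 := by
    refine ⟨fun _ _ => by simp [hD], fun a ha b hb hab => ?_⟩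
    rw [sdiff_sdiff_right_self, inf_eq_inter, mem_inter, mem_insert, mem_singleton] at ha hb
    rcases ha.2 with rfl | rfl <;> rcases hb.2 with rfl | rfl
    exacts [(G.irrefl hab).elim, (huv hab).elim, (huv hab.symm).elim, (G.irrefl hab).elim]
  refine IsProperOn.exists_extend_greedy (p := (H.dist · r)) hdeg sdiff_subset hr'
    (fun w hw hwr => ?_) (by simp [hu]) (by simp [hv]) hru hrv hne hc₀ rfl
  obtain ⟨p, hp⟩ := (hreach w hw).exists_walk_length_eq_dist
  cases p with
  | nil => exact absurd rfl hwr
  | @cons _ y _ h q =>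
    have hy : G.Adj w y ∧ y ∈ C \ {u, v} := by
      simp [H] at h
      simp [h]
    have := H.dist_le q
    rw [Walk.length_cons] at hp
    exact ⟨y, hy.2, hy.1, by omega⟩

lemma exists_isProperOn_of_not_reachable (hD : 3 ≤ D) {C : Finset α}
    (hdeg : ∀ w ∈ C, #{y ∈ C | G.Adj w y} ≤ D) {r u v : α} (hr : r ∈ C) (hu : u ∈ C)
    (hv : v ∈ C) (hru : G.Adj r u) (hrv : G.Adj r v) (huv : ¬ G.Adj u v) (hne : u ≠ v)
    (hw : ∃ w ∈ C \ {u, v}, ¬ (G.induce (C \ {u, v} : Set α)).spanningCoe.Reachable w r)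
    (hsub : ∀ s ⊂ C, ∃ c, G.IsProperOn D s c) :
    ∃ c, G.IsProperOn D C c := by
  classical
  set H := (G.induce (C \ {u, v} : Set α)).spanningCoe
  set s₁ := {w ∈ C | w = u ∨ w = v ∨ H.Reachable w r}
  set s₂ := {w ∈ C | w = u ∨ w = v ∨ ¬ H.Reachable w r}
  have hC : s₁ ∪ s₂ = C := by
    ext w
    simp only [s₁, s₂, mem_union, mem_filter]
    tauto
  have hsep : ∀ a ∈ s₁, ∀ b ∈ s₂, G.Adj a b → a ∈ s₂ ∨ b ∈ s₁ := by
    intro a ha b hb hab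
    simp only [s₁, s₂, mem_filter] at ha hb ⊢
    by_contra! h
    obtain ⟨hau, hav, har⟩ := h.1 ha.1
    obtain ⟨hbu, hbv, hbr⟩ := h.2 hb.1
    exact hbr ((Adj.reachable (show H.Adj b a by simp [H, hab.symm, *])).trans har)
  obtain ⟨w, hwC, hwr⟩ := hw
  obtain ⟨c₁, hc₁⟩ := hsub s₁ <| (ssubset_iff_of_subset (filter_subset _ _)).mpr
    ⟨w, (mem_sdiff.mp hwC).1, by simp_all [s₁]⟩
  obtain ⟨c₂, hc₂⟩ := hsub s₂ <| (ssubset_iff_of_subset (filter_subset _ _)).mpr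
    ⟨r, hr, by simp [hru.ne, hrv.ne]⟩
  rw [← hC] at hdeg ⊢
  refine exists_isProperOn_union hD (by simp [s₁, hu]) (by simp [s₁, hv]) (by simp [s₂, hu])
    (by simp [s₂, hv]) huv hne (fun a ha₁ ha₂ => ?_) hsep (hdeg u (by simp [s₁, hu]))
    (hdeg v (by simp [s₁, hv])) hc₁ hc₂
  simp only [s₁, s₂, mem_filter] at ha₁ ha₂
  tauto

/-- The colouring step of Brooks' theorem. If `C \ {u, v}` stays connected, colour `u`, `v` alike
and the rest greedily towards `r`; otherwise split `C` at `{u, v}` and glue colourings of the two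
smaller pieces. -/
theorem exists_isProperOn_of_forall_ssubset (hD : 3 ≤ D) {C : Finset α}
    (hdeg : ∀ w ∈ C, #{y ∈ C | G.Adj w y} ≤ D) {r u v : α} (hr : r ∈ C) (hu : u ∈ C)
    (hv : v ∈ C) (hru : G.Adj r u) (hrv : G.Adj r v) (huv : ¬ G.Adj u v) (hne : u ≠ v)
    (hsub : ∀ s ⊂ C, ∃ c, G.IsProperOn D s c) :
    ∃ c, G.IsProperOn D C c := by
  by_cases hreach : ∀ w ∈ C \ {u, v}, (G.induce (C \ {u, v} : Set α)).spanningCoe.Reachable w r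
  · exact exists_isProperOn_of_reachable hdeg hr hu hv hru hrv huv hne hreach
  · push Not at hreach
    exact exists_isProperOn_of_not_reachable hD hdeg hr hu hv hru hrv huv hne hreach hsub

end SimpleGraph

section Hypergraph

variable {V : Type*} [DecidableEq V]

variable (V) in
def intersectionGraph : SimpleGraph (Finset V) where
  Adj e f := e ≠ f ∧ (e ∩ f).Nonempty
  symm := ⟨fun e f h => ⟨h.1.symm, inter_comm e f ▸ h.2⟩⟩
  loopless := ⟨fun _ h => h.1 rfl⟩

instance : DecidableRel (intersectionGraph V).Adj :=
  fun e f => inferInstanceAs (Decidable (e ≠ f ∧ (e ∩ f).Nonempty))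

lemma SimpleGraph.IsProperOn.isProperColoring {E : Finset (Finset V)} {q : ℕ}
    {c : Finset V → ℕ} (hc : (intersectionGraph V).IsProperOn q E c) :
    IsProperColoring E q c := by
  refine ⟨hc.1, fun e he e' he' hcol => ?_⟩
  by_contra h
  push Not at h
  exact hc.2 e he e' he' ⟨h.2, h.1⟩ hcol

lemma vdeg_mono {S T : Finset (Finset V)} (hST : S ⊆ T) (x : V) : vdeg S x ≤ vdeg T x :=
  card_le_card (filter_subset_filter _ hST)

lemma deg2_mono {S T : Finset (Finset V)} (hST : S ⊆ T) (x : V) : deg2 S x ≤ deg2 T x :=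
  sum_le_sum_of_subset (filter_subset_filter _ hST)

lemma vdeg_mul_le_deg2 {S : Finset (Finset V)} {x : V} {k : ℕ} (hk : ∀ f ∈ S, x ∈ f → k ≤ #f) :
    vdeg S x * (k - 1) ≤ deg2 S x := by
  rw [vdeg, ← smul_eq_mul, ← sum_const]
  exact sum_le_sum fun f hf =>
    Nat.sub_le_sub_right (hk f (mem_filter.mp hf).1 (mem_filter.mp hf).2) 1

lemma card_eq_of_deg2_le {S : Finset (Finset V)} {x : V} {k : ℕ} (hk1 : 1 ≤ k)
    (hk : ∀ f ∈ S, x ∈ f → k ≤ #f) (hdeg2 : deg2 S x ≤ vdeg S x * (k - 1)) :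
    ∀ f ∈ S, x ∈ f → #f = k := by
  have hle : ∀ f ∈ {f ∈ S | x ∈ f}, k - 1 ≤ #f - 1 := fun f hf =>
    Nat.sub_le_sub_right (hk f (mem_filter.mp hf).1 (mem_filter.mp hf).2) 1
  have heq := (sum_eq_sum_iff_of_le hle).mp <| by
    rw [sum_const, smul_eq_mul]
    exact le_antisymm (vdeg_mul_le_deg2 hk) hdeg2
  intro f hf hxf
  have := heq f (mem_filter.mpr ⟨hf, hxf⟩)
  have := hk f hf hxf
  omega

lemma sum_vdeg_eq_sum_card_inter (S : Finset (Finset V)) (e : Finset V) :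
    ∑ x ∈ e, vdeg S x = ∑ f ∈ S, #(e ∩ f) := by
  simp_rw [vdeg, ← filter_mem_eq_inter]
  exact sum_card_bipartiteAbove_eq_sum_card_bipartiteBelow (· ∈ ·)

lemma sum_card_inter_eq_card_add {S : Finset (Finset V)} {e : Finset V} (he : e ∈ S) :
    ∑ f ∈ S, #(e ∩ f) = #e + ∑ f ∈ S with (intersectionGraph V).Adj e f, #(e ∩ f) := by
  rw [← add_sum_erase _ _ he, inter_self, ← sum_filter_ne_zero]
  congr 2
  ext f
  simp only [mem_filter, mem_erase, card_ne_zero]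
  exact ⟨fun ⟨⟨hfe, hf⟩, hef⟩ => ⟨hf, hfe.symm, hef⟩, fun ⟨hf, hfe, hef⟩ => ⟨⟨hfe.symm, hf⟩, hef⟩⟩

lemma card_nbrs_add_card_le_sum_vdeg {S : Finset (Finset V)} {e : Finset V} (he : e ∈ S) :
    #{f ∈ S | (intersectionGraph V).Adj e f} + #e ≤ ∑ x ∈ e, vdeg S x := by
  have : #{f ∈ S | (intersectionGraph V).Adj e f} ≤
      ∑ f ∈ S with (intersectionGraph V).Adj e f, #(e ∩ f) := by
    rw [card_eq_sum_ones]
    exact sum_le_sum fun f hf => card_pos.mpr (mem_filter.mp hf).2.2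
  rw [sum_vdeg_eq_sum_card_inter, sum_card_inter_eq_card_add he]
  omega

lemma eq_and_eq_mul_self_of_bounds {k t D M : ℕ} (htD : t * t ≤ D) (hDM : D + k ≤ M)
    (hM : M ≤ k * (t + 1)) (hsum : M * (k - 1) + k ≤ k * D) : k = t ∧ D = t * t := by
  rcases k with _ | j
  · have ht : t * t = 0 := by omega
    exact ⟨(mul_self_eq_zero.mp ht).symm, by omega⟩
  simp only [Nat.add_sub_cancel] at hsum
  have hkt : j + 1 ≤ t := by nlinarith
  have htk : t ≤ j + 1 := by nlinarith
  obtain rfl : j + 1 = t := le_antisymm hkt htk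
  exact ⟨rfl, by nlinarith⟩

/-- Double counting around `e`: `D + #e ≤ #nbrs + #e ≤ ∑ x ∈ e, vdeg x ≤ #e * (t + 1)`, while
`vdeg x * (#e - 1) ≤ deg2 x < D` at each vertex of `e`. -/
lemma card_eq_of_min {t D : ℕ} {S : Finset (Finset V)} (hvd : ∀ x, vdeg S x ≤ t + 1)
    (hd2 : ∀ x, deg2 S x < D) (htD : t * t ≤ D)
    (hnbrs : ∀ f ∈ S, D ≤ #{g ∈ S | (intersectionGraph V).Adj f g})
    {e : Finset V} (he : e ∈ S) (hmin : ∀ f ∈ S, #e ≤ #f) :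
    #e = t ∧ D = t * t := by
  have hM : ∑ x ∈ e, vdeg S x ≤ #e * (t + 1) := by
    simpa using sum_le_sum fun x (_ : x ∈ e) => hvd x
  have hsum : (∑ x ∈ e, vdeg S x) * (#e - 1) + #e ≤ #e * D := by
    have hx : ∀ x ∈ e, vdeg S x * (#e - 1) + 1 ≤ D := fun x _ =>
      (vdeg_mul_le_deg2 fun f hf _ => hmin f hf).trans_lt (hd2 x)
    simpa [sum_add_distrib, sum_mul] using sum_le_sum hx
  have hcount := card_nbrs_add_card_le_sum_vdeg he
  exact eq_and_eq_mul_self_of_bounds htD (by have := hnbrs e he; omega) hM hsum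

/-- The equality case of the double counting in `card_eq_of_min`. -/
structure IsTight (S : Finset (Finset V)) (e : Finset V) : Prop where
  card_nbrs : #{f ∈ S | (intersectionGraph V).Adj e f} = #e * #e
  card_of_adj : ∀ f ∈ S, (intersectionGraph V).Adj e f → #f = #e
  card_inter_of_adj : ∀ f ∈ S, (intersectionGraph V).Adj e f → #(e ∩ f) = 1
  vdeg_eq : ∀ x ∈ e, vdeg S x = #e + 1

lemma isTight_of_min {t D : ℕ} {S : Finset (Finset V)} (hvd : ∀ x, vdeg S x ≤ t + 1)
    (hd2 : ∀ x, deg2 S x < D) (htD : t * t ≤ D)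
    (hnbrs : ∀ f ∈ S, D ≤ #{g ∈ S | (intersectionGraph V).Adj f g})
    {e : Finset V} (he : e ∈ S) (hmin : ∀ f ∈ S, #e ≤ #f) :
    D = #e * #e ∧ IsTight S e := by
  obtain ⟨rfl, rfl⟩ := card_eq_of_min hvd hd2 htD hnbrs he hmin
  have hM : ∑ x ∈ e, vdeg S x ≤ ∑ x ∈ e, (#e + 1) := sum_le_sum fun x _ => hvd x
  have hsum := sum_card_inter_eq_card_add he ▸ sum_vdeg_eq_sum_card_inter S e
  have hcount := card_nbrs_add_card_le_sum_vdeg he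
  have hnbrs_e := hnbrs e he
  rw [sum_const, smul_eq_mul, mul_add, mul_one] at hM
  have hvdeg : ∀ x ∈ e, vdeg S x = #e + 1 :=
    (sum_eq_sum_iff_of_le fun x _ => hvd x).mp <| by
      rw [sum_const, smul_eq_mul, mul_add, mul_one]
      omega
  refine ⟨rfl, by omega, fun f hf hef => ?_, fun f hf hef => ?_, hvdeg⟩
  · obtain ⟨x, hx⟩ := hef.2
    have he1 : 1 ≤ #e := card_pos.mpr ⟨x, (mem_inter.mp hx).1⟩
    refine card_eq_of_deg2_le he1 (fun g hg _ => hmin g hg) ?_ f hf (mem_inter.mp hx).2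
    have hsq : (#e + 1) * (#e - 1) + 1 = #e * #e := by
      obtain ⟨j, hj⟩ := Nat.exists_eq_add_of_le' he1
      rw [hj]
      simp only [Nat.add_sub_cancel]
      ring
    have := hd2 x
    rw [hvdeg x (mem_inter.mp hx).1]
    omega
  · have hle : ∀ f ∈ {f ∈ S | (intersectionGraph V).Adj e f}, 1 ≤ #(e ∩ f) := fun f hf =>
      card_pos.mpr (mem_filter.mp hf).2.2
    refine ((sum_eq_sum_iff_of_le hle).mp ?_ f (mem_filter.mpr ⟨hf, hef⟩)).symm
    rw [← card_eq_sum_ones]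
    omega

lemma IsTight.exists_disjoint_nbrs {S : Finset (Finset V)} {e : Finset V} (he : IsTight S e)
    (heS : e ∈ S) (he2 : 2 ≤ #e)
    (hnbr : ∀ f ∈ S, (intersectionGraph V).Adj e f → IsTight S f) :
    ∃ u ∈ S, ∃ v ∈ S, (intersectionGraph V).Adj e u ∧ (intersectionGraph V).Adj e v ∧
      Disjoint u v := by
  have hpair {s s' : Finset V} {a b : V} (ha : a ∈ s ∩ s') (hb : b ∈ s ∩ s') (hab : a ≠ b) :
      #(s ∩ s') ≠ 1 :=
    (one_lt_card.mpr ⟨a, ha, b, hb, hab⟩).ne'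
  have hthrough : ∀ z ∈ e, #({f ∈ S | z ∈ f}.erase e) = #e := fun z hz => by
    have := he.vdeg_eq z hz
    rw [vdeg, ← card_erase_add_one (mem_filter.mpr ⟨heS, hz⟩)] at this
    omega
  have hadj : ∀ z ∈ e, ∀ f ∈ {f ∈ S | z ∈ f}.erase e, f ∈ S ∧ (intersectionGraph V).Adj e f ∧
      z ∈ f := fun z hz f hf => by
    obtain ⟨hfe, hf⟩ := mem_erase.mp hf
    exact ⟨(mem_filter.mp hf).1, ⟨Ne.symm hfe, z, mem_inter.mpr ⟨hz, (mem_filter.mp hf).2⟩⟩,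
      (mem_filter.mp hf).2⟩
  obtain ⟨x, hx, y, hy, hxy⟩ := one_lt_card.mp (by omega : 1 < #e)
  obtain ⟨u, hu⟩ := card_pos.mp (by rw [hthrough x hx]; omega)
  obtain ⟨huS, heu, hxu⟩ := hadj x hx u hu
  by_contra! hcon
  -- Pigeonhole: the `#e` hyperedges through `y` other than `e` would meet `u.erase x`, of size
  -- `#e - 1`, and no two of them at the same point.
  have hmeet : ∀ g ∈ {f ∈ S | y ∈ f}.erase e, ∃ z ∈ u.erase x, z ∈ g := by
    intro g hg
    obtain ⟨hgS, heg, hyg⟩ := hadj y hy g hg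
    obtain ⟨z, hzu, hzg⟩ := not_disjoint_iff.mp (hcon u huS g hgS heu heg)
    refine ⟨z, mem_erase.mpr ⟨?_, hzu⟩, hzg⟩
    rintro rfl
    exact hpair (mem_inter.mpr ⟨hx, hzg⟩) (mem_inter.mpr ⟨hy, hyg⟩) hxy
      (he.card_inter_of_adj g hgS heg)
  have : Nonempty V := ⟨x⟩
  choose! p hpu hpg using hmeet
  obtain ⟨g, hg, g', hg', hgg', hpp⟩ := exists_ne_map_eq_of_card_lt_of_maps_to
    (t := u.erase x) (by rw [card_erase_of_mem hxu, he.card_of_adj u huS heu, hthrough y hy]; omega)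
    hpu
  obtain ⟨hgS, heg, hyg⟩ := hadj y hy g hg
  obtain ⟨hg'S, -, hyg'⟩ := hadj y hy g' hg'
  have hyu : y ∉ u := fun hyu => hpair (mem_inter.mpr ⟨hx, hxu⟩) (mem_inter.mpr ⟨hy, hyu⟩) hxy
    (he.card_inter_of_adj u huS heu)
  have hpy : p g ≠ y := fun h => hyu (h ▸ (mem_erase.mp (hpu g hg)).2)
  have hgg'adj : (intersectionGraph V).Adj g g' := ⟨hgg', y, mem_inter.mpr ⟨hyg, hyg'⟩⟩
  exact hpair (mem_inter.mpr ⟨hpg g hg, hpp ▸ hpg g' hg'⟩) (mem_inter.mpr ⟨hyg, hyg'⟩) hpy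
    ((hnbr g hgS heg).card_inter_of_adj g' hg'S hgg'adj)

lemma exists_isProperOn_of_forall_le_card_nbrs {t D : ℕ} {S : Finset (Finset V)}
    (hS : ∀ e ∈ S, 2 ≤ #e)
    (hvd : ∀ x, vdeg S x ≤ t + 1) (hd2 : ∀ x, deg2 S x < D) (htD : t * t ≤ D)
    (hnbrs : ∀ f ∈ S, D ≤ #{g ∈ S | (intersectionGraph V).Adj f g}) (hS0 : S.Nonempty)
    (ih : ∀ T ⊂ S, ∃ c, (intersectionGraph V).IsProperOn D T c) :
    ∃ c, (intersectionGraph V).IsProperOn D S c := by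
  obtain ⟨e₀, he₀, hmin⟩ := S.exists_min_image card hS0
  set C := {f ∈ S | #f = #e₀}
  have he₀C : e₀ ∈ C := mem_filter.mpr ⟨he₀, rfl⟩
  have htight : ∀ f ∈ C, D = #f * #f ∧ IsTight S f := fun f hf => by
    obtain ⟨hfS, hfe⟩ := mem_filter.mp hf
    exact isTight_of_min hvd hd2 htD hnbrs hfS fun g hg => hfe ▸ hmin g hg
  have hclosed : ∀ f ∈ C, ∀ g ∈ S, (intersectionGraph V).Adj f g → g ∈ C := fun f hf g hg hfg =>
    mem_filter.mpr ⟨hg, ((htight f hf).2.card_of_adj g hg hfg).trans (mem_filter.mp hf).2⟩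
  have hdeg : ∀ f ∈ C, #{g ∈ C | (intersectionGraph V).Adj f g} ≤ D := fun f hf => by
    rw [(htight f hf).1, ← (htight f hf).2.card_nbrs]
    exact card_le_card (filter_subset_filter _ (filter_subset _ _))
  have hD : 3 ≤ D := by
    have := hS e₀ he₀
    rw [(htight e₀ he₀C).1]
    nlinarith
  obtain ⟨u, hu, v, hv, heu, hev, huv⟩ := (htight e₀ he₀C).2.exists_disjoint_nbrs he₀ (hS e₀ he₀)
    fun f hf hadj => (htight f (hclosed e₀ he₀C f hf hadj)).2
  have hne : u ≠ v := by
    rintro rfl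
    obtain ⟨z, hz⟩ := heu.2
    simp [disjoint_self.mp huv] at hz
  obtain ⟨c₁, hc₁⟩ := SimpleGraph.exists_isProperOn_of_forall_ssubset hD hdeg he₀C
    (hclosed e₀ he₀C u hu heu) (hclosed e₀ he₀C v hv hev) heu hev
    (fun h => h.2.ne_empty (disjoint_iff_inter_eq_empty.mp huv)) hne
    fun T hT => ih T (hT.trans_subset (filter_subset _ _))
  obtain ⟨c₂, hc₂⟩ := ih (S \ C) (sdiff_ssubset (filter_subset _ _) ⟨e₀, he₀C⟩)
  have hc := hc₁.piecewise hc₂ (fun a ha ha' => ((mem_sdiff.mp ha').2 ha).elim)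
    fun a ha b hb hab => .inr (hclosed a ha b (mem_sdiff.mp hb).1 hab)
  rw [union_sdiff_of_subset (filter_subset _ _)] at hc
  exact ⟨_, hc⟩

theorem exists_isProperOn_intersectionGraph {t D : ℕ} (S : Finset (Finset V))
    (hS : ∀ e ∈ S, 2 ≤ #e) (hvd : ∀ x, vdeg S x ≤ t + 1) (hd2 : ∀ x, deg2 S x < D)
    (htD : t * t ≤ D) : ∃ c, (intersectionGraph V).IsProperOn D S c := by
  induction S using Finset.strongInduction with
  | H S ih =>
  have ih' : ∀ T ⊂ S, ∃ c, (intersectionGraph V).IsProperOn D T c := fun T hT =>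
    ih T hT (fun e he => hS e (hT.subset he)) (fun x => (vdeg_mono hT.subset x).trans (hvd x))
      fun x => (deg2_mono hT.subset x).trans_lt (hd2 x)
  rcases S.eq_empty_or_nonempty with rfl | hS0
  · exact ⟨fun _ => 1, by simp [SimpleGraph.IsProperOn]⟩
  by_cases hlow : ∃ e ∈ S, #{f ∈ S | (intersectionGraph V).Adj e f} < D
  · obtain ⟨e, he, hlt⟩ := hlow
    obtain ⟨c, hc⟩ := ih' (S.erase e) (erase_ssubset he)
    obtain ⟨δ, hδ⟩ := hc.exists_update_insert (a := e) <| card_image_le.trans_lt <|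
      (card_le_card (filter_subset_filter _ (erase_subset e S))).trans_lt hlt
    exact ⟨_, insert_erase he ▸ hδ⟩
  push Not at hlow
  exact exists_isProperOn_of_forall_le_card_nbrs hS hvd hd2 htD hlow hS0 ih'

end Hypergraph

theorem stmt_2_general {V : Type*} [Fintype V] [DecidableEq V] (E : Finset (Finset V))
    (hloopless : ∀ e ∈ E, 2 ≤ e.card)
    (hdeg : (maxDeg E - 1) ^ 2 ≤ maxDeg2 E + 1) :
    chromIndex E ≤ maxDeg2 E + 1 := by
  have hvd (x : V) : vdeg E x ≤ maxDeg E - 1 + 1 := by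
    have : vdeg E x ≤ maxDeg E := le_sup (mem_univ x)
    omega
  have hd2 (x : V) : deg2 E x < maxDeg2 E + 1 := Nat.lt_succ_of_le (le_sup (mem_univ x))
  obtain ⟨c, hc⟩ := exists_isProperOn_intersectionGraph E hloopless hvd hd2 (by rwa [sq] at hdeg)
  exact Nat.sInf_le ⟨c, hc.isProperColoring⟩

/-- if `(Δ(H) - 1)² ≤ Δ₂(H) + 1` then `q(H) ≤ Δ₂(H) + 1`. -/
theorem stmt_2 {V : Type*} [Fintype V] [DecidableEq V] (E : Finset (Finset V))
    (hE : E.Nonempty) (hloopless : ∀ e ∈ E, 2 ≤ e.card)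
    (hdeg : (maxDeg E - 1) ^ 2 ≤ maxDeg2 E + 1) :
    chromIndex E ≤ maxDeg2 E + 1 :=
  stmt_2_general E hloopless hdeg
end

section
/- Let H = (V,E) be a finite loopless hypergraph with E nonempty which is critical, i.e. every hyperedge e ∈ E satisfies q(H ∖ e) = q(H) − 1. Then q(H) ≤ ar(H) · (Δ(H) − 1) + 1. -/
open Finset

lemma exists_proper_coloring {V : Type*} [Fintype V] [DecidableEq V]
    (E : Finset (Finset V)) : ∃ q c, IsProperColoring E q c := by
  classical
  refine ⟨Fintype.card (Finset V),
    fun e => ((Fintype.equivFin (Finset V)) e).val + 1, ?_, ?_⟩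
  · intro e _
    simp only [Finset.mem_Icc]
    exact ⟨Nat.le_add_left 1 _, ((Fintype.equivFin (Finset V)) e).isLt⟩
  · intro e _ e' _ h
    right
    have : ((Fintype.equivFin (Finset V)) e) = ((Fintype.equivFin (Finset V)) e') :=
      Fin.ext (by simpa using h)
    exact (Fintype.equivFin (Finset V)).injective this

lemma chromIndex_spec {V : Type*} [Fintype V] [DecidableEq V]
    (E : Finset (Finset V)) : ∃ c, IsProperColoring E (chromIndex E) c := by
  have hne : {q | ∃ c, IsProperColoring E q c}.Nonempty := by
    obtain ⟨q, c, hc⟩ := exists_proper_coloring E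
    exact ⟨q, c, hc⟩
  exact Nat.sInf_mem hne

/-- a critical loopless hypergraph satisfies
`q(H) ≤ ar(H) · (Δ(H) - 1) + 1`. -/
theorem stmt_6 {V : Type*} [Fintype V] [DecidableEq V] (E : Finset (Finset V))
    (hE : E.Nonempty) (hloopless : ∀ e ∈ E, 2 ≤ e.card)
    (hcrit : ∀ e ∈ E, chromIndex (E.erase e) = chromIndex E - 1) :
    chromIndex E ≤ E.inf' hE Finset.card * (maxDeg E - 1) + 1 := by
  classical
  set q := chromIndex E with hq
  obtain ⟨e, he, hecard⟩ := Finset.exists_mem_eq_inf' hE Finset.card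
  rw [hecard]
  -- it suffices to show q - 1 ≤ e.card * (maxDeg E - 1)
  suffices h : q - 1 ≤ e.card * (maxDeg E - 1) by omega
  by_contra hcon
  push_neg at hcon
  have hq2 : 2 ≤ q := by omega
  -- get a coloring of E.erase e with q - 1 colors
  obtain ⟨c, hc⟩ := chromIndex_spec (E.erase e)
  rw [hcrit e he] at hc
  -- the neighbors of e
  set N : Finset (Finset V) := (E.erase e).filter (fun a => (a ∩ e).Nonempty) with hN
  have hNsub : N ⊆ e.biUnion (fun x => (E.erase e).filter (fun a => x ∈ a)) := by
    intro a ha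
    rw [hN, Finset.mem_filter] at ha
    obtain ⟨x, hx⟩ := ha.2
    rw [Finset.mem_inter] at hx
    exact Finset.mem_biUnion.mpr ⟨x, hx.2, Finset.mem_filter.mpr ⟨ha.1, hx.1⟩⟩
  have hdeg : ∀ x ∈ e, ((E.erase e).filter (fun a => x ∈ a)).card ≤ maxDeg E - 1 := by
    intro x hx
    have h1 : (E.erase e).filter (fun a => x ∈ a) = (E.filter (fun a => x ∈ a)).erase e := by
      ext a
      simp only [Finset.mem_filter, Finset.mem_erase]
      tauto
    have h2 : e ∈ E.filter (fun a => x ∈ a) := Finset.mem_filter.mpr ⟨he, hx⟩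
    rw [h1, Finset.card_erase_of_mem h2]
    have h3 : vdeg E x ≤ maxDeg E := Finset.le_sup (Finset.mem_univ x)
    exact Nat.sub_le_sub_right h3 1
  have hNcard : N.card ≤ e.card * (maxDeg E - 1) := by
    calc N.card ≤ (e.biUnion (fun x => (E.erase e).filter (fun a => x ∈ a))).card :=
          Finset.card_le_card hNsub
      _ ≤ ∑ x ∈ e, ((E.erase e).filter (fun a => x ∈ a)).card := Finset.card_biUnion_le
      _ ≤ ∑ x ∈ e, (maxDeg E - 1) := Finset.sum_le_sum hdeg
      _ = e.card * (maxDeg E - 1) := by rw [Finset.sum_const, smul_eq_mul]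
  -- find an unused color
  have himg : N.image c ⊆ Finset.Icc 1 (q - 1) := by
    intro k hk
    obtain ⟨a, ha, rfl⟩ := Finset.mem_image.mp hk
    exact hc.1 a (Finset.mem_filter.mp ha).1
  have hlt : (N.image c).card < (Finset.Icc 1 (q - 1)).card := by
    have := Finset.card_image_le (s := N) (f := c)
    rw [Nat.card_Icc]
    omega
  have hnsub : ¬ (Finset.Icc 1 (q - 1) ⊆ N.image c) :=
    fun h => absurd (Finset.card_le_card h) (by omega)
  obtain ⟨k, hk, hknot⟩ := Finset.not_subset.mp hnsub
  -- extend the coloring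
  set c' : Finset V → ℕ := fun a => if a = e then k else c a with hc'
  have hproper : IsProperColoring E (q - 1) c' := by
    constructor
    · intro a ha
      by_cases hae : a = e
      · simpa [hc', hae] using hk
      · have : a ∈ E.erase e := Finset.mem_erase.mpr ⟨hae, ha⟩
        simpa [hc', hae] using hc.1 a this
    · intro a ha a' ha' heq
      by_cases hae : a = e <;> by_cases hae' : a' = e
      · right; rw [hae, hae']
      · -- a = e, a' ≠ e : c a' = k
        have ha'e : a' ∈ E.erase e := Finset.mem_erase.mpr ⟨hae', ha'⟩
        simp only [hc', if_pos hae, if_neg hae'] at heq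
        left
        rw [hae]
        by_contra hemp
        have hne : (a' ∩ e).Nonempty := Finset.nonempty_iff_ne_empty.mpr
          (fun h => hemp (by rwa [Finset.inter_comm]))
        have : a' ∈ N := Finset.mem_filter.mpr ⟨ha'e, hne⟩
        exact hknot (Finset.mem_image.mpr ⟨a', this, heq.symm⟩)
      · have hae2 : a ∈ E.erase e := Finset.mem_erase.mpr ⟨hae, ha⟩
        simp only [hc', if_pos hae', if_neg hae] at heq
        left
        rw [hae']
        by_contra hemp
        have hne : (a ∩ e).Nonempty := Finset.nonempty_iff_ne_empty.mpr hemp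
        have : a ∈ N := Finset.mem_filter.mpr ⟨hae2, hne⟩
        exact hknot (Finset.mem_image.mpr ⟨a, this, heq⟩)
      · have h1 : a ∈ E.erase e := Finset.mem_erase.mpr ⟨hae, ha⟩
        have h2 : a' ∈ E.erase e := Finset.mem_erase.mpr ⟨hae', ha'⟩
        simp only [hc', if_neg hae, if_neg hae'] at heq
        exact hc.2 a h1 a' h2 heq
  have : q ≤ q - 1 := Nat.sInf_le ⟨c', hproper⟩
  omega
end

section
/- Let k ≥ 2 and let H = (V,E) be a finite connected loopless hypergraph such that ar(H) = k, Δ₂(H) = k² − 1, and d_H(e) ≥ k² for every hyperedge e of cardinality k. Then H is k-uniform (every hyperedge has cardinality k), (k+1)-regular (every vertex has degree k+1), and linear. -/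
open Finset

/-- Two vertices are adjacent if some hyperedge contains both. -/
def HAdj {V : Type*} (E : Finset (Finset V)) (x y : V) : Prop :=
  ∃ e ∈ E, x ∈ e ∧ y ∈ e

/-- `H` is connected: any two vertices are joined by an alternating
sequence of vertices and hyperedges in which consecutive elements are incident. -/
def HIsConnected {V : Type*} (E : Finset (Finset V)) : Prop :=
  ∀ x y : V, Relation.ReflTransGen (HAdj E) x y

/-- a connected loopless hypergraph with `ar(H) = k`,
`Δ₂(H) = k² - 1` and `d_H(e) ≥ k²` for every hyperedge of cardinality `k`
is `k`-uniform, `(k+1)`-regular and linear. -/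
theorem stmt_10 {V : Type*} [Fintype V] [DecidableEq V] (E : Finset (Finset V)) (k : ℕ)
    (hk : 2 ≤ k) (hE : E.Nonempty)
    (hconn : HIsConnected E)
    (hloopless : ∀ e ∈ E, 2 ≤ e.card)
    (har : E.inf' hE Finset.card = k)
    (hd2 : maxDeg2 E = k ^ 2 - 1)
    (hdeg : ∀ e ∈ E, e.card = k → k ^ 2 ≤ edgeDeg E e) :
    (∀ e ∈ E, e.card = k) ∧ (∀ x : V, vdeg E x = k + 1) ∧ IsLinear E := by
  have hark : ∀ e ∈ E, k ≤ e.card := fun e he => har ▸ Finset.inf'_le _ he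
  have hd2le : ∀ x : V, deg2 E x ≤ k ^ 2 - 1 := fun x => hd2 ▸ Finset.le_sup (Finset.mem_univ x)
  have hk2 : k ^ 2 - 1 = (k + 1) * (k - 1) := by
    obtain ⟨j, rfl⟩ : ∃ j, k = j + 1 := ⟨k - 1, by omega⟩
    have h : (j + 1) ^ 2 = (j + 2) * j + 1 := by ring
    have h2 : j + 1 + 1 = j + 2 := rfl
    have h3 : j + 1 - 1 = j := rfl
    rw [h2, h3, h, Nat.add_sub_cancel]
  -- every vertex has degree at most k+1
  have hvdeg : ∀ x : V, vdeg E x ≤ k + 1 := by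
    intro x
    have h1 : vdeg E x * (k - 1) ≤ deg2 E x := by
      unfold vdeg deg2
      calc (E.filter (fun e => x ∈ e)).card * (k - 1)
          = ∑ _e ∈ E.filter (fun e => x ∈ e), (k - 1) := by
            rw [Finset.sum_const, smul_eq_mul]
        _ ≤ ∑ e ∈ E.filter (fun e => x ∈ e), (e.card - 1) :=
            Finset.sum_le_sum (fun a ha => by
              have := hark a (Finset.mem_filter.mp ha).1; omega)
    have h2 : vdeg E x * (k - 1) ≤ (k + 1) * (k - 1) := by
      calc vdeg E x * (k - 1) ≤ deg2 E x := h1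
        _ ≤ k ^ 2 - 1 := hd2le x
        _ = (k + 1) * (k - 1) := hk2
    exact Nat.le_of_mul_le_mul_right h2 (by omega)
  -- a vertex of full degree k+1 lies only in edges of cardinality k
  have hfull : ∀ x : V, vdeg E x = k + 1 → ∀ a ∈ E, x ∈ a → a.card = k := by
    intro x hx a ha hxa
    have hub : ∑ e ∈ E.filter (fun e => x ∈ e), (e.card - 1) ≤ (k + 1) * (k - 1) :=
      hk2 ▸ hd2le x
    have hlb : ∑ _e ∈ E.filter (fun e => x ∈ e), (k - 1)
        ≤ ∑ e ∈ E.filter (fun e => x ∈ e), (e.card - 1) :=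
      Finset.sum_le_sum (fun b hb => by
        have := hark b (Finset.mem_filter.mp hb).1; omega)
    have hconst : ∑ _e ∈ E.filter (fun e => x ∈ e), (k - 1) = (k + 1) * (k - 1) := by
      rw [Finset.sum_const, smul_eq_mul]
      have : (E.filter (fun e => x ∈ e)).card = k + 1 := hx
      rw [this]
    have heq : ∑ _e ∈ E.filter (fun e => x ∈ e), (k - 1)
        = ∑ e ∈ E.filter (fun e => x ∈ e), (e.card - 1) := le_antisymm hlb (by omega)
    have hpt := (Finset.sum_eq_sum_iff_of_le (fun b hb => by
        have := hark b (Finset.mem_filter.mp hb).1; omega)).mp heq a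
      (Finset.mem_filter.mpr ⟨ha, hxa⟩)
    have := hark a ha
    omega
  -- the key counting argument around an edge of cardinality k
  have key : ∀ e ∈ E, e.card = k →
      (∀ x ∈ e, vdeg E x = k + 1) ∧ (∀ a ∈ E, a ≠ e → (a ∩ e).card ≤ 1) := by
    intro e he hcard
    set A := (E.erase e).filter (fun a => (a ∩ e).Nonempty) with hA
    have hfib : ∀ x ∈ e, A.filter (fun a => x ∈ a) = (E.filter (fun a => x ∈ a)).erase e := by
      intro x hx
      ext a
      simp only [hA, Finset.mem_filter, Finset.mem_erase]
      constructor
      · rintro ⟨⟨⟨hne, haE⟩, -⟩, hxa⟩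
        exact ⟨hne, haE, hxa⟩
      · rintro ⟨hne, haE, hxa⟩
        exact ⟨⟨⟨hne, haE⟩, ⟨x, Finset.mem_inter.mpr ⟨hxa, hx⟩⟩⟩, hxa⟩
    have hswap : ∑ a ∈ A, (a ∩ e).card = ∑ x ∈ e, (A.filter (fun a => x ∈ a)).card := by
      have h1 : ∀ a : Finset V, (a ∩ e).card = ∑ x ∈ e, if x ∈ a then 1 else 0 := by
        intro a
        rw [Finset.inter_comm, ← Finset.filter_mem_eq_inter, Finset.card_filter]
      have h2 : ∀ x : V, (A.filter (fun a => x ∈ a)).card = ∑ a ∈ A, if x ∈ a then 1 else 0 :=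
        fun x => Finset.card_filter _ _
      simp only [h1, h2]
      exact Finset.sum_comm
    have hAcard_le : A.card ≤ ∑ a ∈ A, (a ∩ e).card := by
      rw [Finset.card_eq_sum_ones]
      exact Finset.sum_le_sum (fun a ha => Finset.card_pos.mpr (Finset.mem_filter.mp ha).2)
    have hfibcard : ∀ x ∈ e, (A.filter (fun a => x ∈ a)).card = vdeg E x - 1 := by
      intro x hx
      rw [hfib x hx, Finset.card_erase_of_mem (Finset.mem_filter.mpr ⟨he, hx⟩)]
      rfl
    have hmid : ∑ a ∈ A, (a ∩ e).card = ∑ x ∈ e, (vdeg E x - 1) := by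
      rw [hswap]; exact Finset.sum_congr rfl hfibcard
    have hsum2 : ∑ x ∈ e, (vdeg E x - 1) ≤ k * k := by
      calc ∑ x ∈ e, (vdeg E x - 1) ≤ ∑ _x ∈ e, k :=
            Finset.sum_le_sum (fun x _ => by have := hvdeg x; omega)
        _ = k * k := by rw [Finset.sum_const, smul_eq_mul, hcard]
    have hchain : k * k ≤ A.card := by
      have h := hdeg e he hcard
      have hsq : k ^ 2 = k * k := sq k
      rw [hsq] at h
      exact h
    have hall : A.card = ∑ a ∈ A, (a ∩ e).card ∧ ∑ x ∈ e, (vdeg E x - 1) = k * k := by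
      constructor <;> omega
    constructor
    · intro x hx
      have heq : ∑ x ∈ e, (vdeg E x - 1) = ∑ _x ∈ e, k := by
        rw [hall.2, Finset.sum_const, smul_eq_mul, hcard]
      have hpt := (Finset.sum_eq_sum_iff_of_le (fun x _ => by
          have := hvdeg x; omega)).mp heq x hx
      have hpos : 0 < vdeg E x := Finset.card_pos.mpr ⟨e, Finset.mem_filter.mpr ⟨he, hx⟩⟩
      omega
    · intro a ha hne
      by_cases hint : (a ∩ e).Nonempty
      · have haA : a ∈ A := Finset.mem_filter.mpr ⟨Finset.mem_erase.mpr ⟨hne, ha⟩, hint⟩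
        have heq1 : ∑ _a ∈ A, 1 = ∑ a ∈ A, (a ∩ e).card := by
          rw [← Finset.card_eq_sum_ones]; exact hall.1
        have hpt := (Finset.sum_eq_sum_iff_of_le (fun b hb =>
            Finset.card_pos.mpr (Finset.mem_filter.mp hb).2)).mp heq1 a haA
        omega
      · rw [Finset.not_nonempty_iff_eq_empty.mp hint]
        simp
  -- an edge of cardinality k exists
  obtain ⟨e₀, he₀, he₀card⟩ := Finset.exists_mem_eq_inf' hE Finset.card
  have hk0 : e₀.card = k := by rw [← he₀card, har]
  obtain ⟨x₀, hx₀⟩ := Finset.card_pos.mp (by omega : 0 < e₀.card)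
  have hQ₀ : ∀ a ∈ E, x₀ ∈ a → a.card = k :=
    hfull x₀ ((key e₀ he₀ hk0).1 x₀ hx₀)
  have hQstep : ∀ z w : V, (∀ a ∈ E, z ∈ a → a.card = k) → HAdj E z w →
      ∀ a ∈ E, w ∈ a → a.card = k := by
    rintro z w hz ⟨b, hb, hzb, hwb⟩
    have hbk := hz b hb hzb
    exact hfull w ((key b hb hbk).1 w hwb)
  have hQall : ∀ y : V, ∀ a ∈ E, y ∈ a → a.card = k := by
    intro y
    induction hconn x₀ y with
    | refl => exact hQ₀
    | tail hpath hstep ih => exact hQstep _ _ ih hstep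
  have huniform : ∀ a ∈ E, a.card = k := by
    intro a ha
    obtain ⟨y, hy⟩ : a.Nonempty := Finset.card_pos.mp (by have := hloopless a ha; omega)
    exact hQall y a ha hy
  have hvx : ∀ x : V, ∃ a ∈ E, x ∈ a := by
    intro x
    rcases (hconn x x₀).cases_head with heq | ⟨z, ⟨b, hb, hxb, -⟩, -⟩
    · exact ⟨e₀, he₀, heq ▸ hx₀⟩
    · exact ⟨b, hb, hxb⟩
  refine ⟨huniform, ?_, ?_⟩
  · intro x
    obtain ⟨a, ha, hxa⟩ := hvx x
    exact (key a ha (huniform a ha)).1 x hxa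
  · intro e he e' he' hne
    exact (key e' he' (huniform e' he')).2 e he hne
end

section
/- Let H = (V,E) be a finite loopless linear hypergraph with E nonempty such that ar(H)² ≥ |V| (equivalently ar(H) ≥ √|V|). Then q(H) ≤ |V|. -/
open Finset

lemma key_lemma {V : Type*} [Fintype V] [DecidableEq V]
    (E : Finset (Finset V)) (e : Finset V) (he : e ∈ E)
    (hmin : ∀ f ∈ E, e.card ≤ f.card) (h2 : 2 ≤ e.card)
    (hlin : IsLinear E) (hsq : Fintype.card V ≤ e.card ^ 2)
    (c : Finset V → ℕ)
    (hrange : ∀ f ∈ E.erase e, 1 ≤ c f)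
    (hproper : ∀ f ∈ E.erase e, ∀ g ∈ E.erase e, f ≠ g → (f ∩ g).Nonempty → c f ≠ c g)
    (hsat : ∀ g ∈ E.erase e, ∀ a, 1 ≤ a → a < c g →
      ∃ p ∈ E.erase e, (p ∩ g).Nonempty ∧ c p = a) :
    ∃ a, 1 ≤ a ∧ a ≤ Fintype.card V ∧
      ∀ f ∈ E.erase e, (f ∩ e).Nonempty → c f ≠ a := by
  by_contra hcon
  push_neg at hcon
  set n := Fintype.card V with hn
  set t := e.card with ht
  have htn : t ≤ n := by simpa [ht, hn] using Finset.card_le_univ e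
  set B := (E.erase e).filter (fun f => (f ∩ e).Nonempty) with hB
  have hBsub : ∀ f ∈ B, f ∈ E.erase e := fun f hf => (mem_filter.mp hf).1
  have hBE : ∀ f ∈ B, f ∈ E := fun f hf => mem_of_mem_erase (hBsub f hf)
  have hBne : ∀ f ∈ B, f ≠ e := fun f hf => ne_of_mem_erase (hBsub f hf)
  have hBcap : ∀ f ∈ B, (f ∩ e).card = 1 := by
    intro f hf
    have h1 : (f ∩ e).card ≤ 1 := hlin f (hBE f hf) e he (hBne f hf)
    have h0 : 1 ≤ (f ∩ e).card := Finset.card_pos.mpr (mem_filter.mp hf).2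
    omega
  -- B_x
  set Bx := fun x : V => B.filter (fun f => x ∈ f) with hBx
  have hfx : ∀ x ∈ e, ∀ f ∈ Bx x, f ∩ e = {x} := by
    intro x hx f hf
    have hxf : x ∈ f := (mem_filter.mp hf).2
    have hfB : f ∈ B := (mem_filter.mp hf).1
    have : x ∈ f ∩ e := mem_inter.mpr ⟨hxf, hx⟩
    obtain ⟨a, ha⟩ := Finset.card_eq_one.mp (hBcap f hfB)
    rw [ha] at this ⊢
    simp_all
  have herase_sub : ∀ x ∈ e, ∀ f ∈ Bx x, f.erase x ⊆ eᶜ := by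
    intro x hx f hf v hv
    rcases Finset.mem_erase.mp hv with ⟨hvx, hvf⟩
    rw [Finset.mem_compl]
    intro hve
    have : v ∈ f ∩ e := mem_inter.mpr ⟨hvf, hve⟩
    rw [hfx x hx f hf] at this
    exact hvx (Finset.mem_singleton.mp this)
  have hdisj : ∀ x ∈ e, ∀ f ∈ Bx x, ∀ g ∈ Bx x, f ≠ g →
      Disjoint (f.erase x) (g.erase x) := by
    intro x hx f hf g hg hfg
    rw [Finset.disjoint_left]
    intro v hvf hvg
    rcases Finset.mem_erase.mp hvf with ⟨hvx, hvf'⟩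
    rcases Finset.mem_erase.mp hvg with ⟨-, hvg'⟩
    have h1 : (f ∩ g).card ≤ 1 := hlin f (hBE f (mem_filter.mp hf).1) g (hBE g (mem_filter.mp hg).1) hfg
    have hxfg : x ∈ f ∩ g := mem_inter.mpr ⟨(mem_filter.mp hf).2, (mem_filter.mp hg).2⟩
    have hvfg : v ∈ f ∩ g := mem_inter.mpr ⟨hvf', hvg'⟩
    have : (({x, v} : Finset V)) ⊆ f ∩ g := by
      intro w hw; rcases Finset.mem_insert.mp hw with h | h
      · exact h ▸ hxfg
      · exact (Finset.mem_singleton.mp h) ▸ hvfg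
    have h2' : ({x, v} : Finset V).card ≤ 1 := le_trans (Finset.card_le_card this) h1
    rw [Finset.card_insert_of_notMem (by simpa using (Ne.symm hvx)), Finset.card_singleton] at h2'
    omega
  -- sum over Bx of erase-cards bounded by n - t
  have hsum_le : ∀ x ∈ e, ∑ f ∈ Bx x, (f.erase x).card ≤ n - t := by
    intro x hx
    have hcb : ((Bx x).biUnion (fun f => f.erase x)).card = ∑ f ∈ Bx x, (f.erase x).card :=
      Finset.card_biUnion (fun f hf g hg hfg => hdisj x hx f hf g hg hfg)
    have hsub : (Bx x).biUnion (fun f => f.erase x) ⊆ eᶜ := by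
      intro v hv
      rcases Finset.mem_biUnion.mp hv with ⟨f, hf, hvf⟩
      exact herase_sub x hx f hf hvf
    have := Finset.card_le_card hsub
    rw [hcb] at this
    simpa [Finset.card_compl, hn, ht] using this
  have herase_card : ∀ x ∈ e, ∀ f ∈ Bx x, (f.erase x).card = f.card - 1 := by
    intro x hx f hf
    exact Finset.card_erase_of_mem (mem_filter.mp hf).2
  have hcard_ge : ∀ x ∈ e, ∀ f ∈ Bx x, t - 1 ≤ (f.erase x).card := by
    intro x hx f hf
    rw [herase_card x hx f hf]
    have := hmin f (hBE f (mem_filter.mp hf).1)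
    omega
  have hbx_le_sum : ∀ x ∈ e, (Bx x).card * (t - 1) ≤ n - t := by
    intro x hx
    calc (Bx x).card * (t - 1) = ∑ _f ∈ Bx x, (t - 1) := by rw [Finset.sum_const, smul_eq_mul]
    _ ≤ ∑ f ∈ Bx x, (f.erase x).card := Finset.sum_le_sum (fun f hf => hcard_ge x hx f hf)
    _ ≤ n - t := hsum_le x hx
  -- |B| = ∑ |Bx|
  have hcard_split : B.card = ∑ x ∈ e, (Bx x).card := by
    have h1 : ∀ x, (Bx x).card = ∑ f ∈ B, (if x ∈ f then 1 else 0) := by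
      intro x; rw [Finset.card_filter]
    calc B.card = ∑ f ∈ B, 1 := by rw [Finset.card_eq_sum_ones]
    _ = ∑ f ∈ B, (f ∩ e).card := by
        apply Finset.sum_congr rfl; intro f hf; rw [hBcap f hf]
    _ = ∑ f ∈ B, ∑ x ∈ e, (if x ∈ f then 1 else 0) := by
        apply Finset.sum_congr rfl; intro f hf
        rw [← Finset.card_filter, Finset.filter_mem_eq_inter]
        exact congrArg Finset.card (Finset.inter_comm f e)
    _ = ∑ x ∈ e, ∑ f ∈ B, (if x ∈ f then 1 else 0) := Finset.sum_comm
    _ = ∑ x ∈ e, (Bx x).card := by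
        apply Finset.sum_congr rfl; intro x _; rw [h1 x]
  -- injection from colors into B
  have hex : ∀ a, 1 ≤ a → a ≤ n → ∃ f ∈ B, c f = a := by
    intro a h1 h2'
    obtain ⟨f, hf, hne, hc⟩ := hcon a h1 h2'
    exact ⟨f, mem_filter.mpr ⟨hf, hne⟩, hc⟩
  classical
  set F : ℕ → Finset V := fun a => if h : ∃ f ∈ B, c f = a then h.choose else ∅ with hF
  have hFmem : ∀ a ∈ Finset.Icc 1 n, F a ∈ B ∧ c (F a) = a := by
    intro a ha
    rcases Finset.mem_Icc.mp ha with ⟨h1, h2'⟩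
    have h := hex a h1 h2'
    rw [hF]; simp only [dif_pos h]
    exact ⟨h.choose_spec.1, h.choose_spec.2⟩
  have hFinj : Set.InjOn F (Finset.Icc 1 n) := by
    intro a ha b hb hab
    have h1 := (hFmem a ha).2
    have h2' := (hFmem b hb).2
    rw [hab] at h1; rw [h1] at h2'; exact h2'
  have hnB : n ≤ B.card := by
    have := Finset.card_le_card_of_injOn F (fun a ha => (hFmem a ha).1) hFinj
    simpa [Nat.card_Icc] using this
  -- arithmetic: t^2 = n
  have hBbound : B.card * (t - 1) ≤ t * (n - t) := by
    calc B.card * (t - 1) = ∑ x ∈ e, (Bx x).card * (t - 1) := by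
          rw [hcard_split, Finset.sum_mul]
    _ ≤ ∑ _x ∈ e, (n - t) := Finset.sum_le_sum (fun x hx => hbx_le_sum x hx)
    _ = t * (n - t) := by rw [Finset.sum_const, smul_eq_mul]
  have htt : t * t = n := by
    have h1 : n * (t - 1) ≤ t * (n - t) := le_trans (Nat.mul_le_mul_right _ hnB) hBbound
    have h2' : n ≤ t * t := by rw [← pow_two]; exact hsq
    zify [htn, (show 1 ≤ t by omega)] at h1
    nlinarith
  have hnt : n - t = t * (t - 1) := by
    have : t * (t - 1) = t * t - t := by
      zify [(show 1 ≤ t by omega), (show t ≤ t * t by nlinarith)]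
      ring
    omega
  have hBn : B.card = n := by
    have h1 : B.card * (t - 1) ≤ n * (t - 1) := by
      calc B.card * (t - 1) ≤ t * (n - t) := hBbound
      _ = t * (t * (t - 1)) := by rw [hnt]
      _ = (t * t) * (t - 1) := by ring
      _ = n * (t - 1) := by rw [htt]
    have := Nat.le_of_mul_le_mul_right h1 (show 0 < t - 1 by omega)
    omega
  have hbx_le : ∀ x ∈ e, (Bx x).card ≤ t := by
    intro x hx
    have h1 := hbx_le_sum x hx
    rw [hnt] at h1
    exact Nat.le_of_mul_le_mul_right h1 (show 0 < t - 1 by omega)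
  have hbx_eq : ∀ x ∈ e, (Bx x).card = t := by
    have hsum_eq : ∑ x ∈ e, (Bx x).card = ∑ _x ∈ e, t := by
      rw [← hcard_split, hBn, Finset.sum_const, smul_eq_mul, ← ht, htt]
    exact (Finset.sum_eq_sum_iff_of_le (fun x hx => hbx_le x hx)).mp hsum_eq
  have hcards : ∀ x ∈ e, ∀ f ∈ Bx x, (f.erase x).card = t - 1 := by
    intro x hx
    have hsum_eq : ∑ _f ∈ Bx x, (t - 1) = ∑ f ∈ Bx x, (f.erase x).card := by
      apply le_antisymm
      · exact Finset.sum_le_sum (fun f hf => hcard_ge x hx f hf)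
      · calc ∑ f ∈ Bx x, (f.erase x).card ≤ n - t := hsum_le x hx
        _ = t * (t - 1) := hnt
        _ = ∑ _f ∈ Bx x, (t - 1) := by rw [Finset.sum_const, smul_eq_mul, hbx_eq x hx]
    have := (Finset.sum_eq_sum_iff_of_le (fun f hf => hcard_ge x hx f hf)).mp hsum_eq
    intro f hf; exact (this f hf).symm
  have hpart : ∀ x ∈ e, (Bx x).biUnion (fun f => f.erase x) = eᶜ := by
    intro x hx
    apply Finset.eq_of_subset_of_card_le
    · intro v hv
      rcases Finset.mem_biUnion.mp hv with ⟨f, hf, hvf⟩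
      exact herase_sub x hx f hf hvf
    · rw [Finset.card_biUnion (fun f hf g hg hfg => hdisj x hx f hf g hg hfg)]
      have : ∑ f ∈ Bx x, (f.erase x).card = ∑ _f ∈ Bx x, (t - 1) :=
        Finset.sum_congr rfl (fun f hf => hcards x hx f hf)
      rw [this, Finset.sum_const, smul_eq_mul, hbx_eq x hx, Finset.card_compl, ← hn, ← ht]
      omega
  -- color injectivity on B
  have himg : Finset.image F (Finset.Icc 1 n) = B := by
    apply Finset.eq_of_subset_of_card_le
    · intro f hf
      rcases Finset.mem_image.mp hf with ⟨a, ha, rfl⟩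
      exact (hFmem a ha).1
    · rw [Finset.card_image_of_injOn hFinj, Nat.card_Icc, hBn]; omega
  have cinj : ∀ f ∈ B, ∀ g ∈ B, c f = c g → f = g := by
    intro f hf g hg hcfg
    have hf' : f ∈ Finset.image F (Finset.Icc 1 n) := himg ▸ hf
    have hg' : g ∈ Finset.image F (Finset.Icc 1 n) := himg ▸ hg
    rcases Finset.mem_image.mp hf' with ⟨a, ha, rfl⟩
    rcases Finset.mem_image.mp hg' with ⟨b, hb, rfl⟩
    have h1 := (hFmem a ha).2
    have h2' := (hFmem b hb).2
    rw [h1, h2'] at hcfg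
    rw [hcfg]
  -- the final contradiction machine
  have final : ∀ x' ∈ e, ∀ f' ∈ Bx x', ∀ g' ∈ B, f' ∩ g' = ∅ → c f' < c g' → False := by
    intro x' hx' f' hf' g' hg' hdisj' hlt
    have hf'B : f' ∈ B := (mem_filter.mp hf').1
    have ha1 : 1 ≤ c f' := hrange f' (hBsub f' hf'B)
    obtain ⟨p, hpE', hpg', hpc⟩ := hsat g' (hBsub g' hg') (c f') ha1 hlt
    have hpf'ne : p ≠ f' := by
      rintro rfl
      rw [hdisj'] at hpg'
      exact Finset.not_nonempty_empty hpg'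
    by_cases hpe : (p ∩ e).Nonempty
    · have hpB : p ∈ B := mem_filter.mpr ⟨hpE', hpe⟩
      exact hpf'ne (cinj p hpB f' hf'B hpc)
    · have hpe0 : p ∩ e = ∅ := Finset.not_nonempty_iff_eq_empty.mp hpe
      by_cases hpf : (p ∩ f').Nonempty
      · exact hproper p hpE' f' (hBsub f' hf'B) hpf'ne hpf hpc
      · -- counting contradiction
        have hpf0 : p ∩ f' = ∅ := Finset.not_nonempty_iff_eq_empty.mp hpf
        have hpsub : p ⊆ eᶜ := by
          intro v hv; rw [Finset.mem_compl]; intro hve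
          have : v ∈ p ∩ e := mem_inter.mpr ⟨hv, hve⟩
          rw [hpe0] at this; exact Finset.notMem_empty v this
        have hpt : t ≤ p.card := hmin p (mem_of_mem_erase hpE')
        have hpne : ∀ h ∈ Bx x', p ≠ h := by
          intro h hh hph
          have : x' ∈ p := hph ▸ (mem_filter.mp hh).2
          have := hpsub this
          rw [Finset.mem_compl] at this
          exact this hx'
        have hdecomp : p = (Bx x').biUnion (fun h => p ∩ h.erase x') := by
          apply Finset.Subset.antisymm
          · intro v hv
            have : v ∈ eᶜ := hpsub hv
            rw [← hpart x' hx'] at this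
            rcases Finset.mem_biUnion.mp this with ⟨h, hh, hvh⟩
            exact Finset.mem_biUnion.mpr ⟨h, hh, mem_inter.mpr ⟨hv, hvh⟩⟩
          · intro v hv
            rcases Finset.mem_biUnion.mp hv with ⟨h, hh, hvh⟩
            exact (mem_inter.mp hvh).1
        have hcard_p : p.card = ∑ h ∈ Bx x', (p ∩ h.erase x').card := by
          conv_lhs => rw [hdecomp]
          exact Finset.card_biUnion (fun f hf g hg hfg =>
            Finset.disjoint_left.mpr (fun v hvf hvg =>
              Finset.disjoint_left.mp (hdisj x' hx' f hf g hg hfg)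
                (mem_inter.mp hvf).2 (mem_inter.mp hvg).2))
        have hterm : ∀ h ∈ Bx x', (p ∩ h.erase x').card ≤ 1 := by
          intro h hh
          have h1 : (p ∩ h).card ≤ 1 :=
            hlin p (mem_of_mem_erase hpE') h (hBE h (mem_filter.mp hh).1) (hpne h hh)
          refine le_trans (Finset.card_le_card ?_) h1
          intro v hv
          exact mem_inter.mpr ⟨(mem_inter.mp hv).1, Finset.mem_of_mem_erase (mem_inter.mp hv).2⟩
        have hterm0 : (p ∩ f'.erase x').card = 0 := by
          rw [Finset.card_eq_zero]
          apply Finset.eq_empty_of_forall_notMem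
          intro v hv
          have : v ∈ p ∩ f' := mem_inter.mpr
            ⟨(mem_inter.mp hv).1, Finset.mem_of_mem_erase (mem_inter.mp hv).2⟩
          rw [hpf0] at this; exact Finset.notMem_empty v this
        have : p.card ≤ t - 1 := by
          rw [hcard_p, ← Finset.add_sum_erase _ _ hf', hterm0, zero_add]
          calc ∑ h ∈ (Bx x').erase f', (p ∩ h.erase x').card
              ≤ ∑ _h ∈ (Bx x').erase f', 1 :=
                Finset.sum_le_sum (fun h hh => hterm h (Finset.mem_of_mem_erase hh))
          _ = ((Bx x').erase f').card := by rw [Finset.sum_const, smul_eq_mul, mul_one]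
          _ = t - 1 := by rw [Finset.card_erase_of_mem hf', hbx_eq x' hx']
        omega
  -- pick x ≠ y, f₀, g
  obtain ⟨x, hx, y, hy, hxy⟩ := Finset.one_lt_card.mp (show 1 < e.card by omega)
  have hBxne : (Bx x).Nonempty := by
    rw [← Finset.card_pos, hbx_eq x hx]; omega
  obtain ⟨f₀, hf₀⟩ := hBxne
  have hf₀B : f₀ ∈ B := (mem_filter.mp hf₀).1
  -- find g in Bx y disjoint from f₀
  set D := (Bx y).filter (fun g => (g ∩ f₀).Nonempty) with hD
  have hDcard : D.card ≤ t - 1 := by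
    classical
    set G : Finset V → V := fun g => if h : (g ∩ f₀).Nonempty then h.choose else x with hG
    have hGmem : ∀ g ∈ D, G g ∈ g ∩ f₀ := by
      intro g hg
      have h := (mem_filter.mp hg).2
      rw [hG]; simp only [dif_pos h]
      exact h.choose_spec
    have hmaps : ∀ g ∈ D, G g ∈ f₀.erase x := by
      intro g hg
      have hv := hGmem g hg
      rcases mem_inter.mp hv with ⟨hvg, hvf⟩
      refine Finset.mem_erase.mpr ⟨?_, hvf⟩
      intro hvx
      have hgBy : g ∈ Bx y := (mem_filter.mp hg).1
      have : (G g) ∈ g ∩ e := mem_inter.mpr ⟨hvg, hvx ▸ hx⟩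
      rw [hfx y hy g hgBy] at this
      exact hxy ((hvx ▸ Finset.mem_singleton.mp this).symm ▸ rfl)
    have hinj : Set.InjOn G D := by
      intro g hg g' hg' hgg'
      by_contra hne
      have hgBy : g ∈ Bx y := (mem_filter.mp (by exact_mod_cast hg : g ∈ D)).1
      have hg'By : g' ∈ Bx y := (mem_filter.mp (by exact_mod_cast hg' : g' ∈ D)).1
      have hcap : (g ∩ g').card ≤ 1 :=
        hlin g (hBE g (mem_filter.mp hgBy).1) g' (hBE g' (mem_filter.mp hg'By).1) hne
      have hyg : y ∈ g ∩ g' := mem_inter.mpr ⟨(mem_filter.mp hgBy).2, (mem_filter.mp hg'By).2⟩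
      have hv := hGmem g (by exact_mod_cast hg)
      have hv' := hGmem g' (by exact_mod_cast hg')
      have hvgg' : G g ∈ g ∩ g' := mem_inter.mpr ⟨(mem_inter.mp hv).1, hgg' ▸ (mem_inter.mp hv').1⟩
      have hveqy : G g = y := by
        by_contra hvy
        have hsub2 : ({y, G g} : Finset V) ⊆ g ∩ g' := by
          intro w hw; rcases Finset.mem_insert.mp hw with h | h
          · exact h ▸ hyg
          · exact (Finset.mem_singleton.mp h) ▸ hvgg'
        have := le_trans (Finset.card_le_card hsub2) hcap
        rw [Finset.card_insert_of_notMem (by simpa using (Ne.symm hvy)), Finset.card_singleton] at this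
        omega
      -- G g = y, but G g ∈ f₀ and y ∈ e means y ∈ f₀ ∩ e = {x}, so y = x, contradiction
      have hyf₀ : y ∈ f₀ := hveqy ▸ (mem_inter.mp hv).2
      have : y ∈ f₀ ∩ e := mem_inter.mpr ⟨hyf₀, hy⟩
      rw [hfx x hx f₀ hf₀] at this
      exact hxy (Finset.mem_singleton.mp this).symm
    have := Finset.card_le_card_of_injOn G hmaps hinj
    rwa [hcards x hx f₀ hf₀] at this
  have hDsub : D ⊆ Bx y := Finset.filter_subset _ _
  have hDne : ¬ (Bx y ⊆ D) := by
    intro hsub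
    have := Finset.card_le_card hsub
    rw [hbx_eq y hy] at this
    omega
  obtain ⟨g, hgBy, hgD⟩ := Finset.not_subset.mp hDne
  have hgf₀ : g ∩ f₀ = ∅ := by
    rw [← Finset.not_nonempty_iff_eq_empty]
    intro hne
    exact hgD (mem_filter.mpr ⟨hgBy, hne⟩)
  have hgB : g ∈ B := (mem_filter.mp hgBy).1
  have hne : f₀ ≠ g := by
    rintro rfl
    have : x ∈ f₀ ∩ f₀ := mem_inter.mpr ⟨(mem_filter.mp hf₀).2, (mem_filter.mp hf₀).2⟩
    rw [Finset.inter_self] at this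
    have : x ∈ f₀ ∩ f₀ := by rw [Finset.inter_self]; exact this
    have hx' : x ∈ f₀ := (mem_filter.mp hf₀).2
    have : x ∈ f₀ ∩ f₀ := mem_inter.mpr ⟨hx', hx'⟩
    rw [hgf₀] at this
    exact Finset.notMem_empty x this
  have hcne : c f₀ ≠ c g := fun h => hne (cinj f₀ hf₀B g hgB h)
  rcases Nat.lt_or_ge (c f₀) (c g) with hlt | hge
  · exact final x hx f₀ hf₀ g hgB (by rw [Finset.inter_comm]; exact hgf₀) hlt
  · have hlt : c g < c f₀ := by omega
    exact final y hy g hgBy f₀ hf₀B hgf₀ hlt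

lemma exists_good {V : Type*} [Fintype V] [DecidableEq V] (s : ℕ)
    (hs : Fintype.card V ≤ s ^ 2) :
    ∀ E : Finset (Finset V), (∀ f ∈ E, s ≤ f.card) → (∀ f ∈ E, 2 ≤ f.card) →
    IsLinear E →
    ∃ c : Finset V → ℕ,
      (∀ f ∈ E, 1 ≤ c f ∧ c f ≤ Fintype.card V) ∧
      (∀ f ∈ E, ∀ g ∈ E, f ≠ g → (f ∩ g).Nonempty → c f ≠ c g) ∧
      (∀ g ∈ E, ∀ a, 1 ≤ a → a < c g → ∃ p ∈ E, (p ∩ g).Nonempty ∧ c p = a) := by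
  intro E
  induction E using Finset.strongInduction with
  | _ E ih =>
    intro hall h2 hlin
    rcases eq_or_ne E ∅ with rfl | hne
    · exact ⟨fun _ => 1, by simp, by simp, by simp⟩
    · have hEne : E.Nonempty := Finset.nonempty_iff_ne_empty.mpr hne
      obtain ⟨e, heE, hemin⟩ := Finset.exists_min_image E Finset.card hEne
      have hss : E.erase e ⊂ E := Finset.erase_ssubset heE
      obtain ⟨c', hc'range, hc'prop, hc'sat⟩ := ih (E.erase e) hss
        (fun f hf => hall f (Finset.mem_of_mem_erase hf))
        (fun f hf => h2 f (Finset.mem_of_mem_erase hf))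
        (fun f hf g hg => hlin f (Finset.mem_of_mem_erase hf) g (Finset.mem_of_mem_erase hg))
      have hsq : Fintype.card V ≤ e.card ^ 2 :=
        le_trans hs (Nat.pow_le_pow_left (hall e heE) 2)
      obtain ⟨a, ha1, han, hafree⟩ := key_lemma E e heE hemin (h2 e heE) hlin hsq c'
        (fun f hf => (hc'range f hf).1) hc'prop hc'sat
      set A := {b : ℕ | 1 ≤ b ∧ ∀ f ∈ E.erase e, (f ∩ e).Nonempty → c' f ≠ b} with hA
      have hAne : A.Nonempty := ⟨a, ha1, hafree⟩
      set a₀ := sInf A with ha₀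
      have ha₀A : a₀ ∈ A := Nat.sInf_mem hAne
      have ha₀n : a₀ ≤ Fintype.card V := le_trans (Nat.sInf_le ⟨ha1, hafree⟩) han
      classical
      refine ⟨fun f => if f = e then a₀ else c' f, ?_, ?_, ?_⟩
      · intro f hf
        by_cases hfe : f = e
        · simp only [hfe, if_pos rfl]
          exact ⟨ha₀A.1, ha₀n⟩
        · simp only [if_neg hfe]
          exact hc'range f (Finset.mem_erase.mpr ⟨hfe, hf⟩)
      · intro f hf g hg hfg hint
        by_cases hfe : f = e
        · subst hfe
          have hge : g ≠ f := fun h => hfg h.symm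
          simp only [if_pos rfl, if_neg hge]
          intro h
          exact ha₀A.2 g (Finset.mem_erase.mpr ⟨hge, hg⟩)
            (by rwa [Finset.inter_comm] at hint) h.symm
        · by_cases hge : g = e
          · subst hge
            simp only [if_neg hfe, if_pos rfl]
            exact fun h => ha₀A.2 f (Finset.mem_erase.mpr ⟨hfe, hf⟩) hint h
          · simp only [if_neg hfe, if_neg hge]
            exact hc'prop f (Finset.mem_erase.mpr ⟨hfe, hf⟩) g
              (Finset.mem_erase.mpr ⟨hge, hg⟩) hfg hint
      · intro g hg b hb1 hblt
        by_cases hge : g = e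
        · subst hge
          have hblt2 : b < a₀ := by simpa using hblt
          have hbA : b ∉ A := Nat.notMem_of_lt_sInf hblt2
          rw [hA] at hbA
          simp only [Set.mem_setOf_eq, not_and, not_forall] at hbA
          obtain ⟨f, hf, hfint, hfc⟩ := hbA hb1
          refine ⟨f, Finset.mem_of_mem_erase hf, hfint, ?_⟩
          simp only [if_neg (Finset.ne_of_mem_erase hf)]
          exact not_not.mp hfc
        · have hblt2 : b < c' g := by simpa [hge] using hblt
          obtain ⟨p, hp, hpint, hpc⟩ := hc'sat g (Finset.mem_erase.mpr ⟨hge, hg⟩) b hb1 hblt2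
          refine ⟨p, Finset.mem_of_mem_erase hp, hpint, ?_⟩
          simp only [if_neg (Finset.ne_of_mem_erase hp)]
          exact hpc

/-- a loopless linear hypergraph with `ar(H)² ≥ |V|` satisfies
`q(H) ≤ |V|`. -/
theorem stmt_13 {V : Type*} [Fintype V] [DecidableEq V] (E : Finset (Finset V))
    (hE : E.Nonempty) (hloopless : ∀ e ∈ E, 2 ≤ e.card)
    (hlinear : IsLinear E)
    (har : (E.inf' hE Finset.card) ^ 2 ≥ Fintype.card V) :
    chromIndex E ≤ Fintype.card V := by
  obtain ⟨c, hrange, hprop, -⟩ := exists_good (E.inf' hE Finset.card) har E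
    (fun f hf => Finset.inf'_le Finset.card hf) hloopless hlinear
  have hpc : IsProperColoring E (Fintype.card V) c := by
    constructor
    · intro f hf
      rw [Finset.mem_Icc]
      exact hrange f hf
    · intro f hf g hg hcfg
      by_cases hfg : f = g
      · exact Or.inr hfg
      · left
        by_contra hne
        exact hprop f hf g hg hfg (Finset.nonempty_iff_ne_empty.mpr hne) hcfg
  exact Nat.sInf_le ⟨c, hpc⟩
end
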